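/- arXiv:1903.08139 — 5 statements merged into one kernel-verified Lean document; each statement's English description precedes it below -/
import Mathlib

section
/- Let u : ℝⁿ → ℝ ∪ {+∞} be a lower semicontinuous convex function, not identically +∞, with U := interior of its effective domain nonempty. Let x₀ ∈ ∂U satisfy u(x₀) < +∞ and suppose the restriction of u to ∂U is continuous at x₀. Then the restriction of u to closure(U) is continuous at x₀. -/
open Set Filter Topology

abbrev En (n : ℕ) := EuclideanSpace ℝ (Fin n)

theorem stmt1 {n : ℕ} (u : En n → EReal)
    (hlsc : LowerSemicontinuous u)
    (hconv : Convex ℝ {p : En n × ℝ | u p.1 ≤ (p.2 : EReal)})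
    (hbot : ∀ x, u x ≠ ⊥) (htop : ∃ x, u x ≠ ⊤)
    (U : Set (En n)) (hU : U = interior {x | u x ≠ ⊤}) (hUne : U.Nonempty)
    (x₀ : En n) (hx₀ : x₀ ∈ frontier U) (hfin : u x₀ ≠ ⊤)
    (hcont : ContinuousWithinAt u (frontier U) x₀) :
    ContinuousWithinAt u (closure U) x₀ := by
  obtain ⟨a, haU⟩ := hUne
  -- The effective domain is convex.
  have hDconv : Convex ℝ {x : En n | u x ≠ ⊤} := by
    intro x hx y hy t r ht hr htr
    have hx' : ((x, (u x).toReal) : En n × ℝ) ∈ {p : En n × ℝ | u p.1 ≤ (p.2 : EReal)} := by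
      simp only [mem_setOf_eq, EReal.coe_toReal hx (hbot x), le_refl]
    have hy' : ((y, (u y).toReal) : En n × ℝ) ∈ {p : En n × ℝ | u p.1 ≤ (p.2 : EReal)} := by
      simp only [mem_setOf_eq, EReal.coe_toReal hy (hbot y), le_refl]
    have hc := hconv hx' hy' ht hr htr
    simp only [mem_setOf_eq, Prod.smul_mk, Prod.mk_add_mk] at hc
    exact ne_top_of_le_ne_top (EReal.coe_ne_top _) hc
  have hUopen : IsOpen U := hU ▸ isOpen_interior
  have hUconv : Convex ℝ U := hU ▸ hDconv.interior
  have hua : u a ≠ ⊤ := by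
    have h1 : a ∈ interior {x : En n | u x ≠ ⊤} := hU ▸ haU
    exact interior_subset h1
  -- Translate so that `a` goes to `0`.
  set h : En n ≃ₜ En n := Homeomorph.addRight a with hh
  set s : Set (En n) := h ⁻¹' U with hs
  have hsconv : Convex ℝ s := by
    intro x hx y hy t r ht hr htr
    have : t • x + r • y + a = t • (x + a) + r • (y + a) := by
      have ha : t • a + r • a = a := by rw [← add_smul, htr, one_smul]
      calc t • x + r • y + a = t • x + r • y + (t • a + r • a) := by rw [ha]
        _ = t • (x + a) + r • (y + a) := by rw [smul_add, smul_add]; abel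
    show t • x + r • y + a ∈ U
    rw [this]
    exact hUconv hx hy ht hr htr
  have hs0 : s ∈ 𝓝 (0 : En n) := by
    have : ContinuousAt h 0 := h.continuous.continuousAt
    have := this.preimage_mem_nhds (by
      show U ∈ 𝓝 (h 0)
      have : h 0 = a := by simp [hh]
      rw [this]
      exact hUopen.mem_nhds haU)
    exact this
  -- Characterizations via the gauge.
  have hmemcl : ∀ x : En n, x ∈ closure U ↔ gauge s (x - a) ≤ 1 := by
    intro x
    rw [gauge_le_one_iff_mem_closure hsconv hs0, ← h.preimage_closure]
    constructor
    · intro hx; show h (x - a) ∈ closure U; simpa [hh] using hx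
    · intro hx; have : h (x - a) ∈ closure U := hx; simpa [hh] using this
  have hmemfr : ∀ x : En n, x ∈ frontier U ↔ gauge s (x - a) = 1 := by
    intro x
    rw [gauge_eq_one_iff_mem_frontier hsconv hs0, ← h.preimage_frontier]
    constructor
    · intro hx; show h (x - a) ∈ frontier U; simpa [hh] using hx
    · intro hx; have : h (x - a) ∈ frontier U := hx; simpa [hh] using this
  set g : En n → ℝ := fun x => gauge s (x - a) with hg
  have hgcont : Continuous g :=
    (continuous_gauge hsconv hs0).comp (continuous_id.sub continuous_const)
  have hg1 : g x₀ = 1 := (hmemfr x₀).1 hx₀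
  -- Main goal via order characterization of tendsto.
  rw [ContinuousWithinAt]
  apply tendsto_order.2
  constructor
  · intro l hl
    exact ((hlsc x₀) l hl).filter_mono nhdsWithin_le_nhds
  · intro b hb
    obtain ⟨r₁, hr₁, hr₁b⟩ := EReal.exists_between_coe_real hb
    obtain ⟨r₂, hr₂, hr₂b⟩ := EReal.exists_between_coe_real hr₁b
    have hr₁₂ : r₁ < r₂ := by exact_mod_cast hr₂
    set M : ℝ := (u a).toReal with hM
    have huaM : u a ≤ (M : EReal) := le_of_eq (EReal.coe_toReal hua (hbot a)).symm
    -- continuity of u on the frontier near x₀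
    have h1 : ∀ᶠ y in 𝓝[frontier U] x₀, u y < (r₁ : EReal) :=
      hcont (Iio_mem_nhds hr₁)
    rw [eventually_nhdsWithin_iff] at h1
    -- the frontier point map
    set yf : En n → En n := fun x => a + (g x)⁻¹ • (x - a) with hyf
    have hyfcont : ContinuousAt yf x₀ := by
      apply continuousAt_const.add
      exact ((hgcont.continuousAt.inv₀ (by rw [hg1]; norm_num)).smul
        (continuousAt_id.sub continuousAt_const))
    have hyfx₀ : yf x₀ = x₀ := by simp [hyf, hg1]
    have hyftend : Tendsto yf (𝓝 x₀) (𝓝 x₀) := by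
      have := hyfcont.tendsto; rwa [hyfx₀] at this
    have h2 : ∀ᶠ x in 𝓝 x₀, yf x ∈ frontier U → u (yf x) < (r₁ : EReal) :=
      hyftend.eventually h1
    have h3 : ∀ᶠ x in 𝓝 x₀, 0 < g x := by
      have : ∀ᶠ t in 𝓝 (g x₀), 0 < t := by rw [hg1]; exact eventually_gt_nhds one_pos
      exact hgcont.continuousAt.eventually this
    have h4 : ∀ᶠ x in 𝓝 x₀, g x * r₁ + (1 - g x) * M < r₂ := by
      have hc : ContinuousAt (fun x => g x * r₁ + (1 - g x) * M) x₀ := by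
        exact (hgcont.continuousAt.mul continuousAt_const).add
          ((continuousAt_const.sub hgcont.continuousAt).mul continuousAt_const)
      have hval : g x₀ * r₁ + (1 - g x₀) * M < r₂ := by rw [hg1]; ring_nf; simpa using hr₁₂
      have : ∀ᶠ t in 𝓝 (g x₀ * r₁ + (1 - g x₀) * M), t < r₂ := eventually_lt_nhds hval
      exact hc.eventually this
    filter_upwards [nhdsWithin_le_nhds h2, nhdsWithin_le_nhds h3, nhdsWithin_le_nhds h4,
      self_mem_nhdsWithin] with x h2x h3x h4x hxcl
    have hg1x : g x ≤ 1 := (hmemcl x).1 hxcl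
    -- yf x is on the frontier
    have hyfr : yf x ∈ frontier U := by
      rw [hmemfr]
      have : yf x - a = (g x)⁻¹ • (x - a) := by simp [hyf]
      rw [show gauge s (yf x - a) = gauge s ((g x)⁻¹ • (x - a)) from by rw [this],
        gauge_smul_of_nonneg (inv_nonneg.2 h3x.le), smul_eq_mul]
      exact inv_mul_cancel₀ h3x.ne'
    have huy : u (yf x) ≤ ((r₁ : ℝ) : EReal) := (h2x hyfr).le
    -- epigraph convexity
    have hmem1 : ((yf x, r₁) : En n × ℝ) ∈ {p : En n × ℝ | u p.1 ≤ (p.2 : EReal)} := huy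
    have hmem2 : ((a, M) : En n × ℝ) ∈ {p : En n × ℝ | u p.1 ≤ (p.2 : EReal)} := huaM
    have hcomb := hconv hmem1 hmem2 h3x.le (sub_nonneg.2 hg1x) (by ring)
    simp only [mem_setOf_eq, Prod.smul_mk, Prod.mk_add_mk, smul_eq_mul] at hcomb
    have hfirst : g x • yf x + (1 - g x) • a = x := by
      simp only [hyf, smul_add, smul_smul, mul_inv_cancel₀ h3x.ne', one_smul, sub_smul]
      abel
    rw [hfirst] at hcomb
    calc u x ≤ ((g x * r₁ + (1 - g x) * M : ℝ) : EReal) := hcomb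
      _ < ((r₂ : ℝ) : EReal) := by exact_mod_cast h4x
      _ < b := hr₂b
end

section
/- Let S ⊆ ℝⁿ be compact and φ : S → ℝ ∪ {+∞} lower semicontinuous. Then the convex hull of the epigraph of φ in ℝⁿ × ℝ is closed, and hence equals the epigraph of the convex envelope of φ. -/
open Set Filter Topology
open scoped RealInnerProductSpace

noncomputable section

/-- The convex envelope of `φ : S → ℝ ∪ {±∞}`: the pointwise supremum of all affine
functions `x ↦ ⟪x, y⟫ + η` majorized by `φ` on `S`. -/
def convEnv {n : ℕ} (S : Set (En n)) (φ : En n → EReal) (x : En n) : EReal :=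
  ⨆ p : {p : En n × ℝ // ∀ z ∈ S, ((⟪z, p.1⟫ + p.2 : ℝ) : EReal) ≤ φ z},
    ((⟪x, p.1.1⟫ + p.1.2 : ℝ) : EReal)

/-!
By Carathéodory, a point of the convex hull of the epigraph is a convex combination
`∑ wᵢ (xᵢ, ξᵢ)` of `dim E + 2` epigraph points. Recording it as `(w, x, μ)` with masses
`μᵢ = wᵢ ξᵢ`, the hull is the image of a set of configurations under the continuous map
`(w, x, μ) ↦ (∑ wᵢ xᵢ, ∑ μᵢ)`. Lower semicontinuity makes this set closed, and since `φ` is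
bounded below on the compact `S`, configurations whose image stays bounded have bounded masses;
so the map is proper on the set and the hull is closed. Separating a point from the closed hull
gives an affine minorant of `φ` passing above the point, whence the hull is the epigraph of the
convex envelope.
-/

theorem isClosed_image_of_isCompact_inter_preimage {X Y : Type*} [TopologicalSpace X]
    [TopologicalSpace Y] [T2Space Y] [CompactlyCoherentSpace Y] {f : X → Y} (hf : Continuous f)
    {Q : Set X} (hQ : ∀ K, IsCompact K → IsCompact (Q ∩ f ⁻¹' K)) : IsClosed (f '' Q) := by
  have hproper : IsProperMap (Q.domRestrict f) := by
    refine isProperMap_iff_isCompact_preimage.2 ⟨hf.comp continuous_subtype_val, fun K hK => ?_⟩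
    rw [Subtype.isCompact_iff]
    convert hQ K hK using 1
    ext x
    simp [domRestrict, and_comm]
  simpa [range_domRestrict] using hproper.isClosed_range

theorem exists_fin_finrank_succ_of_mem_convexHull {E : Type*} [AddCommGroup E] [Module ℝ E]
    [FiniteDimensional ℝ E] {s : Set E} {x : E} (hx : x ∈ convexHull ℝ s) :
    ∃ w ∈ stdSimplex ℝ (Fin (Module.finrank ℝ E + 1)), ∃ z : Fin (Module.finrank ℝ E + 1) → E,
      (∀ i, z i ∈ s) ∧ ∑ i, w i • z i = x := by
  obtain ⟨ι, _, z, w, hzs, hind, hw0, hw1, hwz⟩ := eq_pos_convex_span_of_mem_convexHull hx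
  obtain ⟨i₀⟩ : Nonempty ι := by
    by_contra h
    simp [not_nonempty_iff.1 h] at hw1
  obtain ⟨e⟩ : Nonempty (ι ↪ Fin (Module.finrank ℝ E + 1)) := by
    refine Function.Embedding.nonempty_of_card_le (hind.card_le_finrank_succ.trans ?_)
    simpa using Submodule.finrank_le (vectorSpan ℝ (range z))
  have hoff : ∀ j ∉ range e, Function.extend e w 0 j = 0 := fun j hj =>
    Function.extend_apply' _ _ _ fun ⟨i, hi⟩ => hj ⟨i, hi⟩
  refine ⟨Function.extend e w 0, ⟨fun j => ?_, ?_⟩, Function.extend e z fun _ => z i₀,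
    fun j => ?_, ?_⟩
  · by_cases hj : j ∈ range e
    · obtain ⟨i, rfl⟩ := hj
      simpa [e.injective.extend_apply] using (hw0 i).le
    · simp [hoff j hj]
  · rw [← hw1]
    exact (Fintype.sum_of_injective e e.injective _ _ hoff
      fun i => (e.injective.extend_apply _ _ _).symm).symm
  · by_cases hj : j ∈ range e
    · obtain ⟨i, rfl⟩ := hj
      simpa [e.injective.extend_apply] using hzs ⟨i, rfl⟩
    · rw [Function.extend_apply' _ _ _ fun ⟨i, hi⟩ => hj ⟨i, hi⟩]
      exact hzs ⟨i₀, rfl⟩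
  · rw [← hwz]
    refine (Fintype.sum_of_injective e e.injective _ _ (fun j hj => by simp [hoff j hj])
      fun i => ?_).symm
    simp [e.injective.extend_apply]

section Epigraph

variable {X : Type*} {S : Set X} {φ : X → EReal} {c : ℝ} {m : ℕ}

def epigraphOn (S : Set X) (φ : X → EReal) : Set (X × ℝ) :=
  {p | p.1 ∈ S ∧ φ p.1 ≤ p.2}

theorem isClosed_epigraphOn [TopologicalSpace X] (hS : IsClosed S)
    (hφ : LowerSemicontinuousOn φ S) : IsClosed (epigraphOn S φ) :=
  ((lowerSemicontinuousOn_iff_isClosed_epigraph hS).1 hφ).preimage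
    (continuous_fst.prodMk (continuous_coe_real_ereal.comp continuous_snd))

theorem IsCompact.exists_forall_coe_le_of_lowerSemicontinuousOn [TopologicalSpace X]
    (hS : IsCompact S) (hφ : LowerSemicontinuousOn φ S) (hbot : ∀ x ∈ S, φ x ≠ ⊥) :
    ∃ c : ℝ, ∀ x ∈ S, (c : EReal) ≤ φ x := by
  rcases S.eq_empty_or_nonempty with rfl | hne
  · exact ⟨0, by simp⟩
  obtain ⟨x₀, hx₀, hmin⟩ := hφ.exists_isMinOn hne hS
  obtain ⟨c, -, hc⟩ := EReal.lt_iff_exists_real_btwn.1 (bot_lt_iff_ne_bot.2 (hbot x₀ hx₀))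
  exact ⟨c, fun x hx => hc.le.trans (hmin hx)⟩

abbrev WeightedConfig (E : Type*) (m : ℕ) := (Fin m → ℝ) × (Fin m → E) × (Fin m → ℝ)

/-- `(w, x, μ)` encodes the convex combination `∑ i, w i • (x i, μ i / w i)` of epigraph points.
Masses `μ i = w i * ξ i` rather than heights `ξ i` keep the set closed as weights tend to `0`;
`c * w i ≤ μ i` keeps the masses of zero-weight points nonnegative. -/
def weightedConfigs (S : Set X) (φ : X → EReal) (c : ℝ) (m : ℕ) : Set (WeightedConfig X m) :=
  {q | q.1 ∈ stdSimplex ℝ (Fin m) ∧ ∀ i, q.2.1 i ∈ S ∧ c * q.1 i ≤ q.2.2 i ∧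
    (q.1 i ≠ 0 → (q.2.1 i, q.2.2 i / q.1 i) ∈ epigraphOn S φ)}

theorem isClosed_weightedConfigs [TopologicalSpace X] (hS : IsClosed S)
    (hφ : LowerSemicontinuousOn φ S) : IsClosed (weightedConfigs S φ c m) := by
  simp only [weightedConfigs, ofPred_and, ofPred_forall]
  refine (isClosed_stdSimplex ℝ (Fin m)).preimage continuous_fst |>.inter <|
    isClosed_iInter fun i => ?_
  have hx : Continuous fun q : WeightedConfig X m => q.2.1 i := by fun_prop
  have hw : Continuous fun q : WeightedConfig X m => q.1 i := by fun_prop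
  have hμ : Continuous fun q : WeightedConfig X m => q.2.2 i := by fun_prop
  refine (hS.preimage hx).inter ((isClosed_le (continuous_const.mul hw) hμ).inter ?_)
  have hpoint : ContinuousOn (fun q : WeightedConfig X m => (q.2.1 i, q.2.2 i / q.1 i))
      {q | q.1 i ≠ 0} :=
    hx.continuousOn.prodMk (hμ.continuousOn.div hw.continuousOn fun _ hq => hq)
  convert (hpoint.isOpen_inter_preimage (isOpen_ne_fun hw continuous_const)
    (isClosed_epigraphOn hS hφ).isOpen_compl).isClosed_compl using 1
  ext q
  simp [imp_iff_not_or]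

theorem mass_le_of_mem_weightedConfigs {q : WeightedConfig X m}
    (hq : q ∈ weightedConfigs S φ c m) (i : Fin m) : q.2.2 i ≤ ∑ j, q.2.2 j + |c| := by
  obtain ⟨w, x, μ⟩ := q
  obtain ⟨hw, hq⟩ := hq
  have hexcess : μ i - c * w i ≤ ∑ j, (μ j - c * w j) :=
    Finset.single_le_sum (fun j _ => sub_nonneg.2 (hq j).2.1) (Finset.mem_univ i)
  rw [Finset.sum_sub_distrib, ← Finset.mul_sum, hw.2] at hexcess
  have := mem_Icc_of_mem_stdSimplex hw i
  nlinarith [abs_nonneg c, le_abs_self c, neg_abs_le c, this.1, this.2]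

theorem neg_abs_le_mass_of_mem_weightedConfigs {q : WeightedConfig X m}
    (hq : q ∈ weightedConfigs S φ c m) (i : Fin m) : -|c| ≤ q.2.2 i := by
  have := mem_Icc_of_mem_stdSimplex hq.1 i
  nlinarith [abs_nonneg c, neg_abs_le c, (hq.2 i).2.1, this.1, this.2]

end Epigraph

section Barycenter

variable {E : Type*} [NormedAddCommGroup E] [NormedSpace ℝ E] {S : Set E} {φ : E → EReal}
  {c : ℝ} {m : ℕ}

def configBarycenter (q : WeightedConfig E m) : E × ℝ :=
  (∑ i, q.1 i • q.2.1 i, ∑ i, q.2.2 i)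

theorem continuous_configBarycenter :
    Continuous (configBarycenter : WeightedConfig E m → E × ℝ) := by
  unfold configBarycenter
  fun_prop

theorem configBarycenter_mem_convexHull {q : WeightedConfig E m}
    (hq : q ∈ weightedConfigs S φ c m) : configBarycenter q ∈ convexHull ℝ (epigraphOn S φ) := by
  classical
  obtain ⟨w, x, μ⟩ := q
  obtain ⟨⟨hw0, hw1⟩, hq⟩ := hq
  -- the mass of the zero-weight points, added to the height of every point
  set D := ∑ i, (μ i - w i * (μ i / w i)) with hD
  have hD0 : 0 ≤ D := Finset.sum_nonneg fun i _ => by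
    by_cases hwi : w i = 0
    · simpa [hwi] using (hq i).2.1
    · simp [mul_div_cancel₀ _ hwi]
  set z : Fin m → E × ℝ := fun i => (x i, μ i / w i + D)
  have hz : ∀ i, w i ≠ 0 → z i ∈ epigraphOn S φ := fun i hwi => by
    obtain ⟨hxS, hφ⟩ := (hq i).2.2 hwi
    exact ⟨hxS, hφ.trans (by exact_mod_cast le_add_of_nonneg_right hD0)⟩
  have hsum : configBarycenter (w, x, μ) = ∑ i ∈ Finset.univ.filter (w · ≠ 0), w i • z i := by
    rw [Finset.sum_filter_of_ne fun i _ => mt fun hwi => by simp [hwi]]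
    refine Prod.ext (by simp [configBarycenter, z, Prod.fst_sum]) ?_
    simp only [configBarycenter, z, Prod.snd_sum, Prod.smul_snd, smul_eq_mul, mul_add,
      Finset.sum_add_distrib, ← Finset.sum_mul, hw1, one_mul, hD, Finset.sum_sub_distrib]
    ring
  rw [hsum]
  refine (convex_convexHull ℝ _).sum_mem (fun i _ => hw0 i) ?_ fun i hi =>
    subset_convexHull ℝ _ (hz i (Finset.mem_filter.1 hi).2)
  rwa [Finset.sum_filter_ne_zero]

theorem exists_mem_weightedConfigs_of_mem_convexHull [FiniteDimensional ℝ E]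
    (hc : ∀ x ∈ S, (c : EReal) ≤ φ x) {p : E × ℝ} (hp : p ∈ convexHull ℝ (epigraphOn S φ)) :
    ∃ q ∈ weightedConfigs S φ c (Module.finrank ℝ (E × ℝ) + 1), configBarycenter q = p := by
  obtain ⟨w, hw, z, hz, rfl⟩ := exists_fin_finrank_succ_of_mem_convexHull hp
  have hcz : ∀ i, c ≤ (z i).2 := fun i => by exact_mod_cast (hc _ (hz i).1).trans (hz i).2
  refine ⟨(w, fun i => (z i).1, fun i => w i * (z i).2), ⟨hw, fun i => ⟨(hz i).1, ?_, ?_⟩⟩, ?_⟩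
  · rw [mul_comm]
    exact mul_le_mul_of_nonneg_left (hcz i) (hw.1 i)
  · intro hwi
    simpa [mul_div_cancel_left₀ _ hwi] using hz i
  · ext <;> simp [configBarycenter, Prod.fst_sum, Prod.snd_sum]

theorem isCompact_weightedConfigs_inter_preimage (hS : IsCompact S)
    (hφ : LowerSemicontinuousOn φ S) {K : Set (E × ℝ)} (hK : IsCompact K) :
    IsCompact (weightedConfigs S φ c m ∩ configBarycenter ⁻¹' K) := by
  obtain ⟨B, hB⟩ := hK.bddAbove_image continuous_snd.continuousOn
  have hbox : IsCompact (stdSimplex ℝ (Fin m) ×ˢ (univ.pi fun _ : Fin m => S) ×ˢ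
      Icc (fun _ : Fin m => -|c|) (fun _ => B + |c|)) :=
    (isCompact_stdSimplex ℝ (Fin m)).prod ((isCompact_univ_pi fun _ => hS).prod isCompact_Icc)
  refine hbox.of_isClosed_subset ((isClosed_weightedConfigs hS.isClosed hφ).inter
    (hK.isClosed.preimage continuous_configBarycenter)) ?_
  rintro q ⟨hq, hqK⟩
  have hsum : ∑ j, q.2.2 j ≤ B := hB ⟨_, hqK, rfl⟩
  exact ⟨hq.1, fun i _ => (hq.2 i).1, fun i => neg_abs_le_mass_of_mem_weightedConfigs hq i,
    fun i => (mass_le_of_mem_weightedConfigs hq i).trans (by linarith)⟩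

theorem isClosed_convexHull_epigraphOn [FiniteDimensional ℝ E] (hS : IsCompact S)
    (hφ : LowerSemicontinuousOn φ S) (hbot : ∀ x ∈ S, φ x ≠ ⊥) :
    IsClosed (convexHull ℝ (epigraphOn S φ)) := by
  obtain ⟨c, hc⟩ := hS.exists_forall_coe_le_of_lowerSemicontinuousOn hφ hbot
  have : convexHull ℝ (epigraphOn S φ) =
      configBarycenter '' weightedConfigs S φ c (Module.finrank ℝ (E × ℝ) + 1) :=
    Subset.antisymm (fun p hp => exists_mem_weightedConfigs_of_mem_convexHull hc hp)
      (image_subset_iff.2 fun q hq => configBarycenter_mem_convexHull hq)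
  rw [this]
  exact isClosed_image_of_isCompact_inter_preimage continuous_configBarycenter
    fun K hK => isCompact_weightedConfigs_inter_preimage hS hφ hK

end Barycenter

section Separation

variable {E : Type*} [NormedAddCommGroup E] [InnerProductSpace ℝ E] [CompleteSpace E]
  {S : Set E} {φ : E → EReal} {c : ℝ}

theorem StrongDual.exists_inner_add_mul_eq (f : StrongDual ℝ (E × ℝ)) :
    ∃ (y : E) (s : ℝ), ∀ q : E × ℝ, f q = ⟪q.1, y⟫ + q.2 * s := by
  refine ⟨(InnerProductSpace.toDual ℝ E).symm (f.comp (.inl ℝ E ℝ)), f (0, 1), fun q => ?_⟩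
  rw [← f.comp_inl_add_comp_inr q, real_inner_comm, InnerProductSpace.toDual_symm_apply]
  congr 1
  simpa using f.map_smul q.2 ((0 : E), (1 : ℝ))

/-- The epigraph lies above height `c`, so a vertical separating hyperplane can be tilted into the
graph of an affine minorant. -/
theorem exists_affine_minorant_of_notMem_convexHull
    (hcl : IsClosed (convexHull ℝ (epigraphOn S φ))) (hc : ∀ x ∈ S, (c : EReal) ≤ φ x)
    {p : E × ℝ} (hp : p ∉ convexHull ℝ (epigraphOn S φ)) :
    ∃ (y : E) (η : ℝ), (∀ z ∈ S, ((⟪z, y⟫ + η : ℝ) : EReal) ≤ φ z) ∧ p.2 < ⟪p.1, y⟫ + η := by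
  obtain ⟨f, u, hfC, hfp⟩ := geometric_hahn_banach_closed_point (convex_convexHull ℝ _) hcl hp
  obtain ⟨y, s, hf⟩ := f.exists_inner_add_mul_eq
  have hepi : ∀ z ∈ S, ∀ r : ℝ, φ z ≤ r → ⟪z, y⟫ + r * s < u := fun z hz r hr => by
    simpa [hf] using hfC _ (subset_convexHull ℝ _ (show (z, r) ∈ epigraphOn S φ from ⟨hz, hr⟩))
  rw [hf] at hfp
  by_cases htop : ∀ z ∈ S, φ z = ⊤
  · exact ⟨0, p.2 + 1, fun z hz => by simp [htop z hz], by simp⟩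
  push Not at htop
  obtain ⟨z₀, hz₀, hz₀top⟩ := htop
  have hs : s ≤ 0 := by
    by_contra! hs
    have hlim : Tendsto (fun r : ℝ => ⟪z₀, y⟫ + r * s) atTop atTop :=
      tendsto_atTop_add_const_left _ _ (tendsto_id.atTop_mul_const hs)
    obtain ⟨r, hr, hru⟩ :=
      ((eventually_ge_atTop (φ z₀).toReal).and (hlim.eventually_ge_atTop u)).exists
    exact (hepi z₀ hz₀ r ((EReal.le_coe_toReal hz₀top).trans (by exact_mod_cast hr))).not_ge hru
  rcases hs.lt_or_eq with hs | rfl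
  · have hinner : ∀ x : E, ⟪x, (-s⁻¹) • y⟫ + u / s = (u - ⟪x, y⟫) / s := fun x => by
      rw [real_inner_smul_right]
      field_simp
      ring
    refine ⟨(-s⁻¹) • y, u / s, fun z hz => EReal.le_of_forall_lt_iff_le.1 fun r hr => ?_, ?_⟩
    · rw [hinner, EReal.coe_le_coe_iff, div_le_iff_of_neg hs]
      linarith [hepi z hz r hr.le]
    · rw [hinner, lt_div_iff_of_neg hs]
      linarith
  · set δ := ⟪p.1, y⟫ - u
    have hδ : 0 < δ := by simp only [mul_zero, add_zero] at hfp; linarith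
    set t := (|p.2 - c| + 1) / δ
    have ht : 0 ≤ t := by positivity
    refine ⟨t • y, c - t * u, fun z hz => EReal.le_of_forall_lt_iff_le.1 fun r hr => ?_, ?_⟩
    · have hzu : ⟪z, y⟫ < u := by simpa using hepi z hz r hr.le
      have hcr : c ≤ r := by exact_mod_cast (hc z hz).trans hr.le
      rw [EReal.coe_le_coe_iff, real_inner_smul_right]
      nlinarith
    · have htδ : t * δ = |p.2 - c| + 1 := div_mul_cancel₀ _ hδ.ne'
      rw [real_inner_smul_right]
      linarith [le_abs_self (p.2 - c)]

end Separation

theorem convEnv_le_coe_iff {n : ℕ} {S : Set (En n)} {φ : En n → EReal} {x : En n} {ξ : ℝ} :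
    convEnv S φ x ≤ ξ ↔
      ∀ (y : En n) (η : ℝ), (∀ z ∈ S, ((⟪z, y⟫ + η : ℝ) : EReal) ≤ φ z) → ⟪x, y⟫ + η ≤ ξ := by
  simp only [convEnv, iSup_le_iff, Subtype.forall, Prod.forall, EReal.coe_le_coe_iff]

theorem convexHull_epigraphOn_subset_convEnv {n : ℕ} (S : Set (En n)) (φ : En n → EReal) :
    convexHull ℝ (epigraphOn S φ) ⊆ {p | convEnv S φ p.1 ≤ p.2} := by
  refine convexHull_min (fun q hq => convEnv_le_coe_iff.2 fun y η hmin => ?_) ?_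
  · exact_mod_cast (hmin q.1 hq.1).trans hq.2
  intro p hp q hq a b ha hb hab
  refine convEnv_le_coe_iff.2 fun y η hmin => ?_
  have hp' := convEnv_le_coe_iff.1 hp y η hmin
  have hq' := convEnv_le_coe_iff.1 hq y η hmin
  simp only [Prod.fst_add, Prod.smul_fst, Prod.snd_add, Prod.smul_snd, inner_add_left,
    real_inner_smul_left, smul_eq_mul]
  linear_combination a * hp' + b * hq' - η * hab

theorem setOf_convEnv_le_subset_convexHull {n : ℕ} {S : Set (En n)} {φ : En n → EReal} {c : ℝ}
    (hcl : IsClosed (convexHull ℝ (epigraphOn S φ))) (hc : ∀ x ∈ S, (c : EReal) ≤ φ x) :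
    {p | convEnv S φ p.1 ≤ p.2} ⊆ convexHull ℝ (epigraphOn S φ) := by
  intro p hp
  by_contra hnot
  obtain ⟨y, η, hmin, hlt⟩ := exists_affine_minorant_of_notMem_convexHull hcl hc hnot
  exact hlt.not_ge (convEnv_le_coe_iff.1 hp y η hmin)

theorem stmt2 {n : ℕ} (S : Set (En n)) (hS : IsCompact S)
    (φ : En n → EReal) (hlsc : LowerSemicontinuousOn φ S)
    (hbot : ∀ x ∈ S, φ x ≠ ⊥) :
    IsClosed (convexHull ℝ {p : En n × ℝ | p.1 ∈ S ∧ φ p.1 ≤ (p.2 : EReal)}) ∧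
    convexHull ℝ {p : En n × ℝ | p.1 ∈ S ∧ φ p.1 ≤ (p.2 : EReal)} =
      {p : En n × ℝ | convEnv S φ p.1 ≤ (p.2 : EReal)} := by
  have hcl := isClosed_convexHull_epigraphOn hS hlsc hbot
  obtain ⟨c, hc⟩ := hS.exists_forall_coe_le_of_lowerSemicontinuousOn hlsc hbot
  exact ⟨hcl, (convexHull_epigraphOn_subset_convEnv S φ).antisymm
    (setOf_convEnv_le_subset_convexHull hcl hc)⟩
end
end

section
/- Let Ω ⊆ ℝⁿ be a bounded convex open set. If φ : ∂Ω → ℝ ∪ {+∞} is lower semicontinuous and restricts to a convex function on every line segment contained in ∂Ω, then φ coincides with its convex envelope on ∂Ω. -/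
open Set Filter Topology
open scoped RealInnerProductSpace

noncomputable section

/-- A lower semicontinuous `EReal`-valued function which is never `⊥` on a compact set
is bounded below by a real constant. -/
lemma lsc_lb {n : ℕ} {K : Set (En n)} (hK : IsCompact K) {φ : En n → EReal}
    (hlsc : LowerSemicontinuousOn φ K) (hbot : ∀ z ∈ K, φ z ≠ ⊥) :
    ∃ m : ℝ, ∀ z ∈ K, (m : EReal) ≤ φ z := by
  have h1 : ∀ z ∈ K, ∃ r : ℝ, (r : EReal) < φ z := by
    intro z hz
    rcases EReal.lt_iff_exists_real_btwn.1 (Ne.bot_lt (hbot z hz)) with ⟨r, _, hr2⟩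
    exact ⟨r, hr2⟩
  choose! r hr using h1
  have h2 : ∀ z ∈ K, ∃ U : Set (En n), IsOpen U ∧ z ∈ U ∧ ∀ w ∈ U ∩ K, (r z : EReal) < φ w := by
    intro z hz
    have h := hlsc z hz (r z) (hr z hz)
    rcases mem_nhdsWithin.1 h with ⟨U, hUo, hzU, hU⟩
    exact ⟨U, hUo, hzU, fun w hw => hU ⟨hw.1, hw.2⟩⟩
  choose! U hUo hzU hU using h2
  obtain ⟨t, htK, htfin, hcov⟩ := hK.elim_finite_subcover_image
    (fun z hz => hUo z hz) (fun z hz => mem_biUnion hz (hzU z hz))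
  rcases t.eq_empty_or_nonempty with rfl | hne
  · exact ⟨0, fun z hz => absurd (hcov hz) (by simp)⟩
  · classical
    have hne' : htfin.toFinset.Nonempty := by
      rwa [Set.Finite.toFinset_nonempty]
    refine ⟨htfin.toFinset.inf' hne' r, fun z hz => ?_⟩
    rcases mem_iUnion₂.1 (hcov hz) with ⟨w, hw, hzw⟩
    have hwt : w ∈ htfin.toFinset := htfin.mem_toFinset.2 hw
    have h3 : htfin.toFinset.inf' hne' r ≤ r w := Finset.inf'_le _ hwt
    have h4 : (r w : EReal) < φ z := hU w (htK hw) z ⟨hzw, hz⟩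
    exact le_trans (by exact_mod_cast h3) h4.le

/-- The epigraph of a lower semicontinuous function over a closed set is closed. -/
lemma epi_closed {n : ℕ} {K : Set (En n)} (hK : IsClosed K) {φ : En n → EReal}
    (hlsc : LowerSemicontinuousOn φ K) :
    IsClosed {p : En n × ℝ | p.1 ∈ K ∧ φ p.1 ≤ (p.2 : EReal)} := by
  refine IsSeqClosed.isClosed ?_
  intro p q hp hq
  have hq1 : Tendsto (fun k => (p k).1) atTop (𝓝 q.1) := (continuous_fst.tendsto q).comp hq
  have hq2 : Tendsto (fun k => (p k).2) atTop (𝓝 q.2) := (continuous_snd.tendsto q).comp hq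
  have hmem : q.1 ∈ K := hK.mem_of_tendsto hq1 (Eventually.of_forall fun k => (hp k).1)
  refine ⟨hmem, ?_⟩
  by_contra h
  push_neg at h
  rcases EReal.lt_iff_exists_real_btwn.1 h with ⟨c, hc1, hc2⟩
  have hev := hlsc q.1 hmem (c : EReal) hc2
  have ht : Tendsto (fun k => (p k).1) atTop (𝓝[K] q.1) :=
    tendsto_nhdsWithin_of_tendsto_nhds_of_eventually_within _ hq1
      (Eventually.of_forall fun k => (hp k).1)
  have hev2 : ∀ᶠ k in atTop, c ≤ (p k).2 := by
    filter_upwards [ht.eventually hev] with k hk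
    have h5 : (c : EReal) < ((p k).2 : EReal) := hk.trans_le (hp k).2
    exact_mod_cast h5.le
  have h6 : c ≤ q.2 := ge_of_tendsto hq2 hev2
  exact absurd hc1 (not_lt.2 (by exact_mod_cast h6))

/-- Separation: an affine minorant on a compact convex set `F` with closed convex epigraph,
nearly attaining any value below `φ x` at `x ∈ F`. -/
lemma minorant_on_face {n : ℕ} {F : Set (En n)} (hFc : IsCompact F)
    {φ : En n → EReal}
    (hlsc : LowerSemicontinuousOn φ F) (hbot : ∀ z ∈ F, φ z ≠ ⊥)
    (hepi : Convex ℝ {p : En n × ℝ | p.1 ∈ F ∧ φ p.1 ≤ (p.2 : EReal)})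
    {x : En n} (hx : x ∈ F) {c : ℝ} (hc : (c : EReal) < φ x) :
    ∃ (y : En n) (η : ℝ), (∀ z ∈ F, ((⟪z, y⟫ + η : ℝ) : EReal) ≤ φ z) ∧ c < ⟪x, y⟫ + η := by
  classical
  set E := {p : En n × ℝ | p.1 ∈ F ∧ φ p.1 ≤ (p.2 : EReal)} with hE
  have hEclosed : IsClosed E := epi_closed hFc.isClosed hlsc
  rcases E.eq_empty_or_nonempty with hemp | ⟨p₀, hp₀⟩
  · -- `φ = ⊤` on `F`
    refine ⟨0, c + 1, fun z hz => ?_, ?_⟩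
    · have htop : φ z = ⊤ := by
        by_contra hne
        have h1 : φ z = ((φ z).toReal : EReal) := (EReal.coe_toReal hne (hbot z hz)).symm
        have : ((z, (φ z).toReal) : En n × ℝ) ∈ E := ⟨hz, h1.le⟩
        simp [hemp] at this
      rw [htop]; exact le_top
    · have : ⟪x, (0 : En n)⟫ = 0 := inner_zero_right x
      rw [this]; linarith
  · have hxc : ((x, c) : En n × ℝ) ∉ E := fun h => absurd h.2 (not_le.2 hc)
    obtain ⟨f, u, hfu, hsep⟩ := geometric_hahn_banach_point_closed hepi hEclosed hxc
    set g : En n →L[ℝ] ℝ := f.comp (ContinuousLinearMap.inl ℝ (En n) ℝ) with hg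
    set s : ℝ := f (0, 1) with hs
    have key : ∀ (z : En n) (r : ℝ), f (z, r) = g z + r * s := by
      intro z r
      have h1 : ((z, r) : En n × ℝ) = (z, 0) + r • ((0 : En n), (1 : ℝ)) := by
        ext <;> simp
      rw [h1, map_add, map_smul]
      simp [hg, hs, smul_eq_mul, ContinuousLinearMap.inl_apply]
    have hsep' : ∀ p ∈ E, u < g p.1 + p.2 * s := by
      intro p hp
      have := hsep p hp
      rwa [show p = (p.1, p.2) from rfl, key] at this
    have hfu' : g x + c * s < u := by rwa [key] at hfu
    have hsnn : 0 ≤ s := by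
      by_contra hsneg
      push_neg at hsneg
      set k : ℝ := max 0 ((u - g p₀.1 - p₀.2 * s) / s) with hk
      have hk0 : 0 ≤ k := le_max_left _ _
      have hmem : ((p₀.1, p₀.2 + k) : En n × ℝ) ∈ E := by
        refine ⟨hp₀.1, hp₀.2.trans ?_⟩
        exact_mod_cast (by linarith : p₀.2 ≤ p₀.2 + k)
      have h2 := hsep' _ hmem
      simp only at h2
      have h3 : k * s ≤ ((u - g p₀.1 - p₀.2 * s) / s) * s :=
        mul_le_mul_of_nonpos_right (le_max_right _ _) hsneg.le
      have h4 : ((u - g p₀.1 - p₀.2 * s) / s) * s = u - g p₀.1 - p₀.2 * s :=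
        div_mul_cancel₀ _ hsneg.ne
      nlinarith
    set w : En n := (InnerProductSpace.toDual ℝ (En n)).symm g with hw
    have hwz : ∀ z : En n, ⟪z, w⟫ = g z := by
      intro z
      rw [real_inner_comm]
      exact InnerProductSpace.toDual_symm_apply
    rcases lt_or_eq_of_le hsnn with hspos | hszero
    · -- s > 0 : rescale the separating functional
      refine ⟨(-(1 / s)) • w, u / s, fun z hz => ?_, ?_⟩
      · have hval : ⟪z, (-(1 / s)) • w⟫ + u / s = (u - g z) / s := by
          rw [real_inner_smul_right, hwz]
          field_simp
          ring
        rw [hval]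
        by_contra hcon
        push_neg at hcon
        have hnt : φ z ≠ ⊤ := fun h => by simp [h] at hcon
        have h1 : φ z = ((φ z).toReal : EReal) := (EReal.coe_toReal hnt (hbot z hz)).symm
        have hmem : ((z, (φ z).toReal) : En n × ℝ) ∈ E := ⟨hz, h1.le⟩
        have h2 := hsep' _ hmem
        simp only at h2
        have h3 : (φ z).toReal < (u - g z) / s := by
          rw [h1] at hcon; exact_mod_cast hcon
        have h4 : (φ z).toReal * s < u - g z := by
          rwa [lt_div_iff₀ hspos] at h3
        linarith
      · have hval : ⟪x, (-(1 / s)) • w⟫ + u / s = (u - g x) / s := by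
          rw [real_inner_smul_right, hwz]
          field_simp
          ring
        rw [hval, lt_div_iff₀ hspos]
        linarith
    · -- s = 0 : combine with a constant minorant
      obtain ⟨m, hm⟩ := lsc_lb hFc hlsc hbot
      have hgu : ∀ z ∈ F, φ z ≠ ⊤ → u < g z := by
        intro z hz hnt
        have h1 : φ z = ((φ z).toReal : EReal) := (EReal.coe_toReal hnt (hbot z hz)).symm
        have hmem : ((z, (φ z).toReal) : En n × ℝ) ∈ E := ⟨hz, h1.le⟩
        have h2 := hsep' _ hmem
        simp only at h2
        rw [← hszero] at h2
        linarith
      have hgx : g x < u := by rw [← hszero] at hfu'; linarith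
      have hux : 0 < u - g x := by linarith
      set k : ℝ := max 0 ((c - m) / (u - g x) + 1) with hk
      have hk0 : 0 ≤ k := le_max_left _ _
      have hkbig : c - m < k * (u - g x) := by
        have h1 : (c - m) / (u - g x) + 1 ≤ k := le_max_right _ _
        have h2 : ((c - m) / (u - g x)) * (u - g x) = c - m := div_mul_cancel₀ _ hux.ne'
        nlinarith
      refine ⟨(-k) • w, m + k * u, fun z hz => ?_, ?_⟩
      · have hval : ⟪z, (-k) • w⟫ + (m + k * u) = m + k * (u - g z) := by
          rw [real_inner_smul_right, hwz]; ring
        rw [hval]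
        rcases eq_or_ne (φ z) ⊤ with htop | hnt
        · rw [htop]; exact le_top
        · have h1 := hgu z hz hnt
          have h2' : k * (u - g z) ≤ 0 :=
            mul_nonpos_of_nonneg_of_nonpos hk0 (by linarith)
          have h2 : m + k * (u - g z) ≤ m := by linarith
          refine le_trans ?_ (hm z hz)
          exact_mod_cast h2
      · have hval : ⟪x, (-k) • w⟫ + (m + k * u) = m + k * (u - g x) := by
          rw [real_inner_smul_right, hwz]; ring
        rw [hval]; linarith

/-- Extension of an affine minorant-with-margin on the face `{f = f x}` to a minorant
on the whole frontier, by adding a large multiple of `f · - f x`. -/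
lemma extend_minorant {n : ℕ} {Ω : Set (En n)}
    (hK : IsCompact (frontier Ω))
    {φ : En n → EReal} (hlsc : LowerSemicontinuousOn φ (frontier Ω))
    (hbot : ∀ z ∈ frontier Ω, φ z ≠ ⊥)
    (f : En n →L[ℝ] ℝ) {x : En n}
    (hfr : ∀ z ∈ frontier Ω, f z ≤ f x)
    {a : En n → ℝ} (hacont : Continuous a)
    {δ : ℝ} (hδ : 0 < δ)
    (hminor : ∀ z ∈ frontier Ω, f z = f x → ((a z + δ : ℝ) : EReal) ≤ φ z) :
    ∃ t : ℕ, ∀ z ∈ frontier Ω, ((a z + t * (f z - f x) : ℝ) : EReal) ≤ φ z := by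
  by_contra hcon
  push_neg at hcon
  choose z hzmem hzlt using hcon
  obtain ⟨m, hm⟩ := lsc_lb hK hlsc hbot
  obtain ⟨x₀, hx₀, hx₀max⟩ := hK.exists_isMaxOn ⟨z 0, hzmem 0⟩ hacont.continuousOn
  set C : ℝ := a x₀ with hC
  have hreal : ∀ t : ℕ, m < a (z t) + t * (f (z t) - f x) := by
    intro t
    have h1 : (m : EReal) ≤ φ (z t) := hm _ (hzmem t)
    have h2 := (h1.trans_lt (hzlt t))
    exact_mod_cast h2
  have haC : ∀ t : ℕ, a (z t) ≤ C := fun t => hx₀max (hzmem t)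
  have hfle : ∀ t : ℕ, f (z t) - f x ≤ 0 := fun t => by
    have := hfr (z t) (hzmem t); linarith
  obtain ⟨zl, hzl, ψ, hψmono, hψtend⟩ := hK.tendsto_subseq hzmem
  -- `f (z (ψ j)) - f x ≥ (m - C) / ψ j → 0`, hence `f zl = f x`
  have hlow : ∀ t : ℕ, 0 < t → (m - C) / t ≤ f (z t) - f x := by
    intro t ht
    have h1 := hreal t
    have h2 := haC t
    have h3 : m - C < t * (f (z t) - f x) := by linarith
    rw [div_le_iff₀ (by exact_mod_cast ht)]
    nlinarith [hfle t, (by exact_mod_cast ht : (0:ℝ) < (t:ℝ))]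
  have hψpos : ∀ᶠ j in atTop, 0 < ψ j := by
    filter_upwards [eventually_ge_atTop 1] with j hj
    exact Nat.lt_of_lt_of_le Nat.zero_lt_one (hj.trans (hψmono.id_le j))
  have htend0 : Tendsto (fun j => (m - C) / (ψ j : ℝ)) atTop (𝓝 0) :=
    (tendsto_const_div_atTop_nhds_zero_nat (m - C)).comp hψmono.tendsto_atTop
  have hftend : Tendsto (fun j => f (z (ψ j)) - f x) atTop (𝓝 (f zl - f x)) :=
    ((f.continuous.tendsto zl).comp hψtend).sub tendsto_const_nhds
  have hge : 0 ≤ f zl - f x := by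
    have h1 : ∀ᶠ j in atTop, (m - C) / (ψ j : ℝ) ≤ f (z (ψ j)) - f x := by
      filter_upwards [hψpos] with j hj
      exact hlow (ψ j) hj
    have h2 : f zl - f x ≥ 0 := le_of_tendsto_of_tendsto htend0 hftend h1
    linarith
  have hfeq : f zl = f x := le_antisymm (hfr zl hzl) (by linarith)
  -- LSC contradiction at `zl`
  have hφzl : ((a zl + δ : ℝ) : EReal) ≤ φ zl := hminor zl hzl hfeq
  have hlt : ((a zl + δ / 2 : ℝ) : EReal) < φ zl :=
    lt_of_lt_of_le (by exact_mod_cast (by linarith : a zl + δ / 2 < a zl + δ)) hφzl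
  have hev := hlsc zl hzl _ hlt
  have hψwithin : Tendsto (fun j => z (ψ j)) atTop (𝓝[frontier Ω] zl) :=
    tendsto_nhdsWithin_of_tendsto_nhds_of_eventually_within _ hψtend
      (Eventually.of_forall fun j => hzmem (ψ j))
  have hev2 : ∀ᶠ j in atTop, a zl + δ / 2 < a (z (ψ j)) := by
    filter_upwards [hψwithin.eventually hev] with j hj
    have h1 : φ (z (ψ j)) < ((a (z (ψ j)) + (ψ j) * (f (z (ψ j)) - f x) : ℝ) : EReal) :=
      hzlt (ψ j)
    have h2 : (a zl + δ / 2 : ℝ) < a (z (ψ j)) + (ψ j) * (f (z (ψ j)) - f x) := by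
      exact_mod_cast hj.trans h1
    have h3 : (ψ j : ℝ) * (f (z (ψ j)) - f x) ≤ 0 :=
      mul_nonpos_of_nonneg_of_nonpos (Nat.cast_nonneg _) (hfle (ψ j))
    linarith
  have hatend : Tendsto (fun j => a (z (ψ j))) atTop (𝓝 (a zl)) :=
    (hacont.tendsto zl).comp hψtend
  have : a zl + δ / 2 ≤ a zl := ge_of_tendsto hatend (hev2.mono fun j hj => hj.le)
  linarith

theorem stmt4 {n : ℕ} (Ω : Set (En n)) (hb : Bornology.IsBounded Ω)
    (hc : Convex ℝ Ω) (ho : IsOpen Ω) (φ : En n → EReal)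
    (hbot : ∀ x ∈ frontier Ω, φ x ≠ ⊥)
    (hlsc : LowerSemicontinuousOn φ (frontier Ω))
    (hseg : ∀ a b : En n, segment ℝ a b ⊆ frontier Ω →
      Convex ℝ {p : En n × ℝ | p.1 ∈ segment ℝ a b ∧ φ p.1 ≤ (p.2 : EReal)}) :
    ∀ x ∈ frontier Ω, convEnv (frontier Ω) φ x = φ x := by
  intro x hx
  have hKfr : IsCompact (frontier Ω) :=
    Metric.isCompact_of_isClosed_isBounded isClosed_frontier
      (hb.closure.subset frontier_subset_closure)
  refine le_antisymm ?_ ?_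
  · rw [convEnv]
    exact iSup_le fun p => p.2 x hx
  · -- `φ x ≤ convEnv`
    refine le_of_forall_lt fun c hc' => ?_
    rcases EReal.lt_iff_exists_real_btwn.1 hc' with ⟨c', hc1, hc2⟩
    rcases EReal.lt_iff_exists_real_btwn.1 hc2 with ⟨c'', hcc, hc3⟩
    have hcc' : c' < c'' := by exact_mod_cast hcc
    -- supporting hyperplane at `x`
    have hxcl : x ∈ closure Ω := frontier_subset_closure hx
    have hxfr : x ∈ closure Ω \ Ω := ho.frontier_eq ▸ hx
    obtain ⟨f, hf⟩ := geometric_hahn_banach_open_point hc ho hxfr.2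
    have hcl : ∀ z ∈ closure Ω, f z ≤ f x := fun z hz =>
      closure_minimal (fun a ha => (hf a ha).le)
        (isClosed_le f.continuous continuous_const) hz
    set F : Set (En n) := closure Ω ∩ {z | f z = f x} with hF
    have hxF : x ∈ F := ⟨hxcl, rfl⟩
    have hFfr : F ⊆ frontier Ω := by
      intro z hz
      rw [ho.frontier_eq]
      exact ⟨hz.1, fun hzin => absurd hz.2 (hf z hzin).ne⟩
    have hFconv : Convex ℝ F := by
      refine (hc.closure).inter ?_
      intro p hp q hq s t hs ht hst
      simp only [mem_setOf_eq, map_add, map_smul, smul_eq_mul] at *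
      rw [hp, hq, ← add_mul, hst, one_mul]
    have hFc : IsCompact F :=
      Metric.isCompact_of_isClosed_isBounded
        (isClosed_closure.inter (isClosed_eq f.continuous continuous_const))
        (hb.closure.subset inter_subset_left)
    have hepi : Convex ℝ {p : En n × ℝ | p.1 ∈ F ∧ φ p.1 ≤ (p.2 : EReal)} := by
      intro p hp q hq s t hs ht hst
      have hseg' : segment ℝ p.1 q.1 ⊆ F := hFconv.segment_subset hp.1 hq.1
      have hsub : segment ℝ p.1 q.1 ⊆ frontier Ω := hseg'.trans hFfr
      have h1 := hseg p.1 q.1 hsub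
        ⟨left_mem_segment ℝ p.1 q.1, hp.2⟩ ⟨right_mem_segment ℝ p.1 q.1, hq.2⟩ hs ht hst
      exact ⟨hseg' h1.1, h1.2⟩
    -- affine minorant on the face F almost attaining `c''` at `x`
    obtain ⟨y, η, hyη, hyx⟩ := minorant_on_face hFc (hlsc.mono hFfr)
      (fun z hz => hbot z (hFfr hz)) hepi hxF hc3
    set δ : ℝ := c'' - c' with hδdef
    have hδ : 0 < δ := by linarith
    set a : En n → ℝ := fun z => ⟪z, y⟫ + (η - δ) with ha
    have hacont : Continuous a := by
      refine Continuous.add ?_ continuous_const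
      exact continuous_id.inner continuous_const
    have hminor : ∀ z ∈ frontier Ω, f z = f x → ((a z + δ : ℝ) : EReal) ≤ φ z := by
      intro z hz hfz
      have hzF : z ∈ F := ⟨frontier_subset_closure hz, hfz⟩
      have : a z + δ = ⟪z, y⟫ + η := by simp [ha]; ring
      rw [this]
      exact hyη z hzF
    obtain ⟨t, hmin⟩ := extend_minorant hKfr hlsc hbot f (fun z hz => hcl z (frontier_subset_closure hz)) hacont hδ hminor
    -- assemble the affine minorant on all of the frontier
    set w : En n := (InnerProductSpace.toDual ℝ (En n)).symm f with hw
    have hwz : ∀ z : En n, ⟪z, w⟫ = f z := by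
      intro z
      rw [real_inner_comm]
      exact InnerProductSpace.toDual_symm_apply
    have hkey : ∀ z : En n, ⟪z, y + (t : ℝ) • w⟫ + ((η - δ) - t * f x)
        = a z + t * (f z - f x) := by
      intro z
      rw [inner_add_right, real_inner_smul_right, hwz]
      simp [ha]; ring
    set p : {p : En n × ℝ // ∀ z ∈ frontier Ω, ((⟪z, p.1⟫ + p.2 : ℝ) : EReal) ≤ φ z} :=
      ⟨(y + (t : ℝ) • w, (η - δ) - t * f x), by
        intro z hz
        rw [hkey z]
        exact hmin z hz⟩ with hp
    have hle : (c' : EReal) ≤ convEnv (frontier Ω) φ x := by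
      refine le_trans ?_ (le_iSup
        (fun p : {p : En n × ℝ // ∀ z ∈ frontier Ω, ((⟪z, p.1⟫ + p.2 : ℝ) : EReal) ≤ φ z}
          => ((⟪x, p.1.1⟫ + p.1.2 : ℝ) : EReal)) p)
      have hval : ⟪x, p.1.1⟫ + p.1.2 = a x + t * (f x - f x) := hkey x
      have hax : c' < a x := by
        have : a x = ⟪x, y⟫ + η - δ := by simp [ha]; ring
        rw [this]
        linarith
      have : c' < ⟪x, p.1.1⟫ + p.1.2 := by rw [hval]; simp; linarith
      exact_mod_cast this.le
    exact lt_of_lt_of_le hc1 hle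
end
end

section
/- Let Ω ⊆ ℝⁿ be a bounded convex open set, φ : ∂Ω → ℝ ∪ {+∞} lower semicontinuous and convex on every segment in ∂Ω, and a : ℝⁿ → ℝ an affine function with a ≤ φ on ∂Ω. Then the set {x ∈ ℝⁿ : conv-env(φ)(x) = a(x)} equals the convex hull of {x ∈ ∂Ω : φ(x) = a(x)}. -/
/-!
Write `K = {φ = a}` for the contact set. On `conv K` the envelope is squeezed: every affine
minorant of `φ` lies below `a` on `K`, hence on `conv K`. Conversely, `K` is compact by lower
semicontinuity, so `conv K` is compact (Carathéodory) and a point `x ∉ conv K` is strictly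
separated from it by a hyperplane `⟪·, v⟫ = u`. On the compact part of the boundary where
`⟪·, v⟫ ≥ u` the gap `φ - a` is bounded below by some `δ > 0`, so `a + ε (⟪·, v⟫ - u)` is still
a minorant of `φ` for small `ε > 0`; it exceeds `a` at `x`, so the envelope does too.
-/

open Set Filter Topology
open scoped RealInnerProductSpace

noncomputable section

theorem isCompact_convexHull {E : Type*} [NormedAddCommGroup E] [NormedSpace ℝ E]
    [FiniteDimensional ℝ E] {K : Set E} (hK : IsCompact K) : IsCompact (convexHull ℝ K) := by
  rcases K.eq_empty_or_nonempty with rfl | ⟨z₀, hz₀⟩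
  · simp
  set N := Module.finrank ℝ E + 1
  suffices convexHull ℝ K = (fun q : (Fin N → ℝ) × (Fin N → E) => ∑ j, q.1 j • q.2 j) ''
      (stdSimplex ℝ (Fin N) ×ˢ univ.pi fun _ => K) from
    this ▸ ((isCompact_stdSimplex ℝ (Fin N)).prod (isCompact_univ_pi fun _ => hK)).image
      (by fun_prop)
  refine Subset.antisymm (fun x hx => ?_) ?_
  · obtain ⟨ι, _, z, w, hzK, hz, hw0, hw1, rfl⟩ := eq_pos_convex_span_of_mem_convexHull hx
    -- Carathéodory: at most `dim E + 1` points are needed; pad with zero weights.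
    obtain ⟨e⟩ : Nonempty (ι ↪ Fin N) := Function.Embedding.nonempty_of_card_le <| by
      simpa [N] using hz.card_le_finrank_succ.trans (Nat.succ_le_succ (Submodule.finrank_le _))
    have hw (i : ι) : Function.extend e w 0 (e i) = w i := e.injective.extend_apply _ _ _
    have hz' (i : ι) : Function.extend e z (fun _ => z₀) (e i) = z i :=
      e.injective.extend_apply _ _ _
    have hout (j : Fin N) (hj : j ∉ range e) : Function.extend e w 0 j = 0 :=
      Function.extend_apply' _ _ _ (by simpa using hj)
    refine ⟨(Function.extend e w 0, Function.extend e z fun _ => z₀), ⟨⟨fun j => ?_, ?_⟩,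
      fun j _ => ?_⟩, ?_⟩
    · by_cases hj : j ∈ range e
      · obtain ⟨i, rfl⟩ := hj
        simpa only [hw] using (hw0 i).le
      · exact (hout j hj).ge
    · rw [← hw1]
      exact (Fintype.sum_of_injective e e.injective _ _ hout fun i => (hw i).symm).symm
    · by_cases hj : j ∈ range e
      · obtain ⟨i, rfl⟩ := hj
        simpa only [hz'] using hzK (mem_range_self i)
      · simpa [Function.extend_apply' _ _ _ (by simpa using hj)] using hz₀
    · exact (Fintype.sum_of_injective e e.injective _ _ (fun j hj => by simp [hout j hj])
        fun i => by simp only [hw, hz']).symm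
  · rintro _ ⟨q, ⟨hw, hq⟩, rfl⟩
    exact (convex_convexHull ℝ K).sum_mem (fun j _ => hw.1 j) hw.2
      fun j _ => subset_convexHull ℝ K (hq j (mem_univ j))

theorem LowerSemicontinuousOn.isClosed_setOf_le {X γ : Type*} [TopologicalSpace X]
    [LinearOrder γ] [TopologicalSpace γ] [ClosedIciTopology γ] {S : Set X} {φ g : X → γ}
    (hS : IsClosed S) (hφ : LowerSemicontinuousOn φ S) (hg : Continuous g) :
    IsClosed {z | z ∈ S ∧ φ z ≤ g z} :=
  ((lowerSemicontinuousOn_iff_isClosed_epigraph hS).1 hφ).preimage (continuous_id.prodMk hg)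

section Compact

variable {X : Type*} [TopologicalSpace X] [T2Space X] {S : Set X} {φ : X → EReal} {a : X → ℝ}

theorem IsCompact.exists_pos_add_le (hS : IsCompact S) (hφ : LowerSemicontinuousOn φ S)
    (ha : Continuous a) (hlt : ∀ z ∈ S, (a z : EReal) < φ z) :
    ∃ δ > 0, ∀ z ∈ S, ((a z + δ : ℝ) : EReal) ≤ φ z := by
  let t : Ioi (0 : ℝ) → Set X := fun δ => {z | z ∈ S ∧ φ z ≤ ((a z + δ : ℝ) : EReal)}
  have ht_closed (δ : Ioi (0 : ℝ)) : IsClosed (t δ) :=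
    hφ.isClosed_setOf_le hS.isClosed (continuous_coe_real_ereal.comp (by fun_prop))
  have ht_mono : Monotone t := fun δ δ' hδ z ⟨hzS, hz⟩ =>
    ⟨hzS, hz.trans (EReal.coe_le_coe_iff.2 (by simpa using hδ))⟩
  have ht_empty : S ∩ ⋂ δ, t δ = ∅ := by
    refine eq_empty_of_forall_notMem fun z ⟨hzS, hz⟩ => ?_
    obtain ⟨r, har, hrφ⟩ := EReal.exists_between_coe_real (hlt z hzS)
    have hδ : 0 < r - a z := sub_pos.2 (EReal.coe_lt_coe_iff.1 har)
    have := (mem_iInter.1 hz ⟨r - a z, hδ⟩).2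
    simp only [add_sub_cancel] at this
    exact (this.trans_lt hrφ).false
  obtain ⟨δ, hδ⟩ := hS.elim_directed_family_closed t ht_closed ht_empty ht_mono.directed_ge
  refine ⟨δ, δ.2, fun z hzS => le_of_not_ge fun h => ?_⟩
  exact eq_empty_iff_forall_notMem.1 hδ z ⟨hzS, hzS, h⟩

theorem IsCompact.exists_pos_add_mul_le (hS : IsCompact S) (hφ : LowerSemicontinuousOn φ S)
    {g : X → ℝ} (ha : Continuous a) (hg : Continuous g) (hle : ∀ z ∈ S, (a z : EReal) ≤ φ z)
    (hlt : ∀ z ∈ S, 0 ≤ g z → (a z : EReal) < φ z) :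
    ∃ ε > 0, ∀ z ∈ S, ((a z + ε * g z : ℝ) : EReal) ≤ φ z := by
  have hT : IsCompact {z | z ∈ S ∧ 0 ≤ g z} :=
    hS.of_isClosed_subset (hS.isClosed.inter (isClosed_le continuous_const hg)) fun _ h => h.1
  obtain ⟨δ, hδ, hδφ⟩ := hT.exists_pos_add_le (hφ.mono fun _ h => h.1) ha fun z h => hlt z h.1 h.2
  obtain ⟨M, hM⟩ := hS.bddAbove_image hg.continuousOn
  have hM₁ : 0 < max M 1 := lt_max_of_lt_right one_pos
  refine ⟨δ / max M 1, by positivity, fun z hz => ?_⟩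
  rcases le_or_gt 0 (g z) with hgz | hgz
  · refine le_trans (EReal.coe_le_coe_iff.2 ?_) (hδφ z ⟨hz, hgz⟩)
    have : g z ≤ max M 1 := (hM (mem_image_of_mem g hz)).trans (le_max_left _ _)
    calc a z + δ / max M 1 * g z ≤ a z + δ / max M 1 * max M 1 := by gcongr
      _ = a z + δ := by rw [div_mul_cancel₀ _ hM₁.ne']
  · refine le_trans (EReal.coe_le_coe_iff.2 ?_) (hle z hz)
    have := mul_neg_of_pos_of_neg (div_pos hδ hM₁) hgz
    linarith

end Compact

theorem exists_inner_lt_of_notMem_of_convex {E : Type*} [NormedAddCommGroup E]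
    [InnerProductSpace ℝ E] [CompleteSpace E] {s : Set E} {x : E} (hs : Convex ℝ s)
    (hs' : IsClosed s) (hx : x ∉ s) : ∃ (v : E) (u : ℝ), (∀ z ∈ s, ⟪z, v⟫ < u) ∧ u < ⟪x, v⟫ := by
  obtain ⟨f, u, hfs, hfx⟩ := geometric_hahn_banach_closed_point hs hs' hx
  refine ⟨(InnerProductSpace.toDual ℝ E).symm f, u, fun z hz => ?_, ?_⟩ <;>
    rw [real_inner_comm, InnerProductSpace.toDual_symm_apply]
  exacts [hfs z hz, hfx]

namespace convEnv

variable {n : ℕ} {S : Set (En n)} {φ : En n → EReal} {y : En n} {η : ℝ}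

theorem le_apply (h : ∀ z ∈ S, ((⟪z, y⟫ + η : ℝ) : EReal) ≤ φ z) (x : En n) :
    ((⟪x, y⟫ + η : ℝ) : EReal) ≤ convEnv S φ x :=
  le_iSup (fun p : {p : En n × ℝ // ∀ z ∈ S, ((⟪z, p.1⟫ + p.2 : ℝ) : EReal) ≤ φ z} =>
    ((⟪x, p.1.1⟫ + p.1.2 : ℝ) : EReal)) ⟨(y, η), h⟩

theorem apply_le_of_mem_convexHull {x : En n}
    (hx : x ∈ convexHull ℝ {z | z ∈ S ∧ φ z = ((⟪z, y⟫ + η : ℝ) : EReal)}) :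
    convEnv S φ x ≤ ((⟪x, y⟫ + η : ℝ) : EReal) := by
  refine iSup_le fun ⟨⟨y', η'⟩, hp⟩ => EReal.coe_le_coe_iff.2 ?_
  have hK : {z | z ∈ S ∧ φ z = ((⟪z, y⟫ + η : ℝ) : EReal)} ⊆ {w | ⟪y' - y, w⟫ ≤ η - η'} :=
    fun z ⟨hzS, hz⟩ => by
      have := EReal.coe_le_coe_iff.1 (hz ▸ hp z hzS)
      simp only [mem_ofPred_eq, inner_sub_left, real_inner_comm z] at this ⊢
      linarith
  have := convexHull_min hK
    (convex_halfSpace_le (innerSL ℝ (y' - y) : En n →ₗ[ℝ] ℝ).isLinear _) hx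
  simp only [mem_ofPred_eq, inner_sub_left, real_inner_comm x] at this
  dsimp only
  linarith

theorem mem_convexHull_of_apply_eq (hS : IsCompact S) (hφ : LowerSemicontinuousOn φ S)
    (ha : ∀ z ∈ S, ((⟪z, y⟫ + η : ℝ) : EReal) ≤ φ z) {x : En n}
    (hx : convEnv S φ x = ((⟪x, y⟫ + η : ℝ) : EReal)) :
    x ∈ convexHull ℝ {z | z ∈ S ∧ φ z = ((⟪z, y⟫ + η : ℝ) : EReal)} := by
  set K := {z | z ∈ S ∧ φ z = ((⟪z, y⟫ + η : ℝ) : EReal)}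
  have hK_eq : K = {z | z ∈ S ∧ φ z ≤ ((⟪z, y⟫ + η : ℝ) : EReal)} :=
    ext fun z => and_congr_right fun hz => ⟨le_of_eq, fun h => h.antisymm (ha z hz)⟩
  have hK : IsCompact K := hS.of_isClosed_subset
    (hK_eq ▸ hφ.isClosed_setOf_le hS.isClosed (continuous_coe_real_ereal.comp (by fun_prop)))
    fun _ h => h.1
  by_contra hxK
  obtain ⟨v, u, hKu, hux⟩ := exists_inner_lt_of_notMem_of_convex (convex_convexHull ℝ K)
    (isCompact_convexHull hK).isClosed hxK
  obtain ⟨ε, hε, hεφ⟩ := hS.exists_pos_add_mul_le hφ (a := fun z => ⟪z, y⟫ + η)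
    (g := fun z => ⟪z, v⟫ - u) (by fun_prop) (by fun_prop) ha fun z hz hzu =>
      (ha z hz).lt_of_ne fun h => (hKu z (subset_convexHull ℝ K ⟨hz, h.symm⟩)).not_ge
        (by linarith)
  have htilt (z : En n) : ⟪z, y + ε • v⟫ + (η - ε * u) = ⟪z, y⟫ + η + ε * (⟪z, v⟫ - u) := by
    rw [inner_add_right, real_inner_smul_right]
    ring
  have := hx ▸ le_apply (fun z hz => htilt z ▸ hεφ z hz) x
  rw [htilt, EReal.coe_le_coe_iff] at this
  linarith [mul_pos hε (sub_pos.2 hux)]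

theorem setOf_apply_eq_eq_convexHull (hS : IsCompact S) (hφ : LowerSemicontinuousOn φ S)
    (ha : ∀ z ∈ S, ((⟪z, y⟫ + η : ℝ) : EReal) ≤ φ z) :
    {x | convEnv S φ x = ((⟪x, y⟫ + η : ℝ) : EReal)} =
      convexHull ℝ {z | z ∈ S ∧ φ z = ((⟪z, y⟫ + η : ℝ) : EReal)} :=
  Subset.antisymm (fun _ hx => mem_convexHull_of_apply_eq hS hφ ha hx) fun x hx =>
    (apply_le_of_mem_convexHull hx).antisymm (le_apply ha x)

end convEnv

theorem stmt6_general {n : ℕ} (Ω : Set (En n)) (hb : Bornology.IsBounded Ω)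
    (φ : En n → EReal)
    (hlsc : LowerSemicontinuousOn φ (frontier Ω))
    (y : En n) (η : ℝ)
    (ha : ∀ z ∈ frontier Ω, ((⟪z, y⟫ + η : ℝ) : EReal) ≤ φ z) :
    {x | convEnv (frontier Ω) φ x = ((⟪x, y⟫ + η : ℝ) : EReal)} =
      convexHull ℝ {x | x ∈ frontier Ω ∧ φ x = ((⟪x, y⟫ + η : ℝ) : EReal)} :=
  convEnv.setOf_apply_eq_eq_convexHull (Metric.isCompact_of_isClosed_isBounded isClosed_frontier
    (hb.closure.subset frontier_subset_closure)) hlsc ha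

theorem stmt6 {n : ℕ} (Ω : Set (En n)) (hb : Bornology.IsBounded Ω)
    (hc : Convex ℝ Ω) (ho : IsOpen Ω) (φ : En n → EReal)
    (hbot : ∀ x ∈ frontier Ω, φ x ≠ ⊥)
    (hlsc : LowerSemicontinuousOn φ (frontier Ω))
    (hseg : ∀ a b : En n, segment ℝ a b ⊆ frontier Ω →
      Convex ℝ {p : En n × ℝ | p.1 ∈ segment ℝ a b ∧ φ p.1 ≤ (p.2 : EReal)})
    (y : En n) (η : ℝ)
    (ha : ∀ z ∈ frontier Ω, ((⟪z, y⟫ + η : ℝ) : EReal) ≤ φ z) :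
    {x | convEnv (frontier Ω) φ x = ((⟪x, y⟫ + η : ℝ) : EReal)} =
      convexHull ℝ {x | x ∈ frontier Ω ∧ φ x = ((⟪x, y⟫ + η : ℝ) : EReal)} :=
  stmt6_general Ω hb φ hlsc y η ha
end
end

section
/- Let u : ℝⁿ → ℝ ∪ {+∞} be a lower semicontinuous convex function, not identically +∞, with U := interior of its effective domain nonempty, and let x₀ ∈ ∂U with u(x₀) < +∞. Then the following are equivalent: (i) for some x₁ ∈ U the one-sided directional derivative lim_{t→0⁺} (u(x₀ + t(x₁−x₀)) − u(x₀))/t is finite; (ii) this limit is finite for every x₁ ∈ U; (iii) u admits a subgradient at x₀; (iv) there is a sequence xᵢ ∈ U converging to x₀ at which u is differentiable and |∇u(xᵢ)| does not tend to +∞. -/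
/-!
Write `f` for the real-valued restriction of `u` to its domain. By convexity the difference
quotients in (i) increase with `t`, so a finite limit means that `f` grows at least linearly
along the segment from `x₀` to `x₁`. For one interior `x₁` such a bound yields a subgradient, by
separating the open strict epigraph of `f` over `U` from the segment joining `(x₀, f x₀)` and
`(x₁, f x₀ + c)`; conversely a subgradient gives the bound for every `x₁`.

Given a subgradient `ℓ`, on the shrunken balls `x₀ + t • (B(x₁, ρ) - x₀)` the function `f` is
bounded above by convexity and below by `ℓ`, both within `O(t)` of `f x₀`. Rademacher's theorem
provides points of differentiability there, at which these bounds control the gradient uniformly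
in `t`. Conversely, bounded gradients converge along a subsequence, and the gradient inequality
passes to the limit at `x₀` by lower semicontinuity.
-/

open Set Filter Topology
open scoped RealInnerProductSpace

noncomputable section

open Metric

section EReal

variable {E : Type*} {u : E → EReal}

lemma EReal.le_coe_iff_ne_top_and_toReal_le {v : EReal} (hv : v ≠ ⊥) {r : ℝ} :
    v ≤ r ↔ v ≠ ⊤ ∧ v.toReal ≤ r := by
  induction v using EReal.rec with
  | bot => exact absurd rfl hv
  | coe a => simp
  | top => simp

lemma EReal.coe_le_iff_le_toReal {v : EReal} (hv : v ≠ ⊥) {r : ℝ} :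
    (r : EReal) ≤ v ↔ (v ≠ ⊤ → r ≤ v.toReal) := by
  induction v using EReal.rec with
  | bot => exact absurd rfl hv
  | coe a => simp
  | top => simp

lemma convexOn_toReal_of_convex_epigraph [AddCommGroup E] [Module ℝ E] (hbot : ∀ x, u x ≠ ⊥)
    (hconv : Convex ℝ {p : E × ℝ | u p.1 ≤ p.2}) :
    ConvexOn ℝ {x | u x ≠ ⊤} (fun x => (u x).toReal) := by
  refine convexOn_iff_convex_epigraph.2 ?_
  convert hconv using 1
  ext p
  exact (EReal.le_coe_iff_ne_top_and_toReal_le (hbot p.1)).symm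

lemma LowerSemicontinuous.lowerSemicontinuousWithinAt_toReal [TopologicalSpace E]
    (hu : LowerSemicontinuous u) (hbot : ∀ x, u x ≠ ⊥) {x₀ : E} (hx₀ : u x₀ ≠ ⊤) :
    LowerSemicontinuousWithinAt (fun x => (u x).toReal) {x | u x ≠ ⊤} x₀ := by
  intro y hy
  have hy' : (y : EReal) < u x₀ := by
    rw [← EReal.coe_toReal hx₀ (hbot x₀)]
    exact_mod_cast hy
  filter_upwards [nhdsWithin_le_nhds (hu x₀ y hy'), self_mem_nhdsWithin] with x hx hxD
  rw [← EReal.coe_toReal hxD (hbot x)] at hx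
  exact_mod_cast hx

lemma exists_inner_subgradient_iff [NormedAddCommGroup E] [InnerProductSpace ℝ E] [CompleteSpace E]
    (hbot : ∀ x, u x ≠ ⊥) (x₀ : E) (a : ℝ) :
    (∃ y : E, ∀ x, ((a + ⟪x - x₀, y⟫ : ℝ) : EReal) ≤ u x) ↔
      ∃ ℓ : StrongDual ℝ E, ∀ x ∈ {x | u x ≠ ⊤}, a + ℓ (x - x₀) ≤ (u x).toReal := by
  simp only [EReal.coe_le_iff_le_toReal (hbot _)]
  constructor
  · rintro ⟨y, hy⟩
    exact ⟨InnerProductSpace.toDual ℝ E y, fun x hx => by simpa [real_inner_comm] using hy x hx⟩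
  · rintro ⟨ℓ, hℓ⟩
    refine ⟨(InnerProductSpace.toDual ℝ E).symm ℓ, fun x hx => ?_⟩
    rw [real_inner_comm, InnerProductSpace.toDual_symm_apply]
    exact hℓ x hx

end EReal

section Ray

variable {E : Type*} [AddCommGroup E] [Module ℝ E] {s : Set E} {f : E → ℝ} {x y : E}

lemma ConvexOn.comp_ray (hf : ConvexOn ℝ s f) (hx : x ∈ s) (hy : y ∈ s) :
    ConvexOn ℝ (Icc 0 1) (fun t : ℝ => f (x + t • (y - x))) := by
  have h := (hf.comp_affineMap (AffineMap.lineMap x y)).subset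
    (fun t ht => hf.1.lineMap_mem hx hy ht) (convex_Icc 0 1)
  have hg : (fun t : ℝ => f (x + t • (y - x))) = f ∘ AffineMap.lineMap x y := by
    ext t
    simp [AffineMap.lineMap_apply, add_comm]
  rwa [hg]

lemma ConvexOn.apply_add_smul_sub_le (hf : ConvexOn ℝ s f) (hx : x ∈ s) (hy : y ∈ s) {t : ℝ}
    (ht : t ∈ Icc (0 : ℝ) 1) : f (x + t • (y - x)) ≤ f x + t * (f y - f x) := by
  have h := hf.2 hx hy (sub_nonneg.2 ht.2) ht.1 (sub_add_cancel 1 t)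
  have hcomb : (1 - t) • x + t • y = x + t • (y - x) := by
    simp only [sub_smul, one_smul, smul_sub]; abel
  rw [hcomb, smul_eq_mul, smul_eq_mul] at h
  linarith

lemma ConvexOn.monotoneOn_slope_ray (hf : ConvexOn ℝ s f) (hx : x ∈ s) (hy : y ∈ s) :
    MonotoneOn (fun t : ℝ => (f (x + t • (y - x)) - f x) / t) (Ioc 0 1) := by
  intro a ha b hb hab
  simpa using (hf.comp_ray hx hy).secant_mono ⟨le_rfl, zero_le_one⟩ (Ioc_subset_Icc_self ha)
    (Ioc_subset_Icc_self hb) ha.1.ne' hb.1.ne' hab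

lemma ConvexOn.exists_tendsto_slope_ray_iff (hf : ConvexOn ℝ s f) (hx : x ∈ s) (hy : y ∈ s) :
    (∃ m : ℝ, Tendsto (fun t : ℝ => (f (x + t • (y - x)) - f x) / t) (𝓝[>] 0) (𝓝 m)) ↔
      ∃ c : ℝ, ∀ t ∈ Icc (0 : ℝ) 1, f x + c * t ≤ f (x + t • (y - x)) := by
  have hmono := hf.monotoneOn_slope_ray hx hy
  constructor
  · rintro ⟨m, hm⟩
    refine ⟨m, fun t ht => ?_⟩
    rcases ht.1.eq_or_lt with rfl | ht0
    · simp
    have hmt : m ≤ (f (x + t • (y - x)) - f x) / t := by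
      refine le_of_tendsto hm ?_
      filter_upwards [Ioc_mem_nhdsGT ht0] with r hr
      exact hmono ⟨hr.1, hr.2.trans ht.2⟩ ⟨ht0, ht.2⟩ hr.2
    rw [le_div_iff₀ ht0] at hmt
    linarith
  · rintro ⟨c, hc⟩
    refine ⟨_, (hmono.mono Ioo_subset_Ioc_self).tendsto_nhdsWithin_Ioo_right
      (nonempty_Ioo.2 one_pos) ⟨c, ?_⟩⟩
    rintro _ ⟨t, ht, rfl⟩
    rw [le_div_iff₀ ht.1]
    linarith [hc t ⟨ht.1.le, ht.2.le⟩]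

end Ray

section Normed

variable {E : Type*} [NormedAddCommGroup E] [NormedSpace ℝ E] {s : Set E} {f : E → ℝ}

lemma ConvexOn.le_sub_of_hasFDerivAt (hf : ConvexOn ℝ s f) {x y : E} (hx : x ∈ s) (hy : y ∈ s)
    {L : StrongDual ℝ E} (hL : HasFDerivAt f L x) : L (y - x) ≤ f y - f x := by
  have hray : HasDerivAt (fun t : ℝ => x + t • (y - x)) (y - x) 0 := by
    simpa using ((hasDerivAt_id (0 : ℝ)).smul_const (y - x)).const_add x
  have hL' : HasFDerivAt f L (x + (0 : ℝ) • (y - x)) := by simpa using hL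
  simpa [slope] using (hf.comp_ray hx hy).le_slope_of_hasDerivAt ⟨le_rfl, zero_le_one⟩
    ⟨zero_le_one, le_rfl⟩ zero_lt_one (hL'.comp_hasDerivAt 0 hray)

lemma ConvexOn.norm_fderiv_le (hf : ConvexOn ℝ s f) {w : E} {r M : ℝ} (hr : 0 < r)
    (hball : closedBall w r ⊆ s) (hw : DifferentiableAt ℝ f w)
    (hM : ∀ v ∈ closedBall w r, f v ≤ M) : ‖fderiv ℝ f w‖ ≤ (M - f w) / r := by
  have hshift : ∀ d ∈ closedBall (0 : E) r, w + d ∈ closedBall w r := fun d hd => by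
    simpa using hd
  have hdir : ∀ d ∈ closedBall (0 : E) r, fderiv ℝ f w d ≤ M - f w := fun d hd => by
    have h := hf.le_sub_of_hasFDerivAt (hball (mem_closedBall_self hr.le))
      (hball (hshift d hd)) hw.hasFDerivAt
    rw [add_sub_cancel_left] at h
    linarith [hM _ (hshift d hd)]
  refine ContinuousLinearMap.opNorm_bound_of_ball_bound hr _ _ fun d hd => ?_
  rw [Real.norm_eq_abs, abs_le]
  constructor
  · have h := hdir (-d) (by simpa using hd)
    rw [map_neg] at h
    linarith
  · exact hdir d hd

lemma ConvexOn.le_of_tendsto_fderiv (hf : ConvexOn ℝ s f) {x₀ : E}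
    (hlsc : LowerSemicontinuousWithinAt f s x₀) {p : ℕ → E} {ℓ : StrongDual ℝ E}
    (hps : ∀ i, p i ∈ s) (hp : Tendsto p atTop (𝓝 x₀))
    (hdiff : ∀ i, DifferentiableAt ℝ f (p i))
    (hℓ : Tendsto (fun i => fderiv ℝ f (p i)) atTop (𝓝 ℓ)) {x : E} (hx : x ∈ s) :
    f x₀ + ℓ (x - x₀) ≤ f x := by
  have happly : Tendsto (fun i => fderiv ℝ f (p i) (x - p i)) atTop (𝓝 (ℓ (x - x₀))) :=
    (isBoundedBilinearMap_apply.continuous.tendsto _).comp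
      (hℓ.prodMk_nhds (tendsto_const_nhds.sub hp))
  refine le_of_forall_pos_le_add fun δ hδ => ?_
  have hnear : ∀ᶠ i in atTop, f x₀ - δ < f (p i) :=
    (tendsto_nhdsWithin_iff.2 ⟨hp, .of_forall hps⟩).eventually (hlsc _ (sub_lt_self _ hδ))
  have h : f x₀ - δ + ℓ (x - x₀) ≤ f x := by
    refine le_of_tendsto (happly.const_add _) (hnear.mono fun i hi => ?_)
    linarith [hf.le_sub_of_hasFDerivAt (hps i) hx (hdiff i).hasFDerivAt]
  linarith

lemma ConvexOn.le_of_forall_mem_interior_le (hf : ConvexOn ℝ s f) {g : E → ℝ}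
    (hg : Continuous g) {x₁ x : E} (hx₁ : x₁ ∈ interior s) (hx : x ∈ s)
    (hle : ∀ w ∈ interior s, g w ≤ f w) : g x ≤ f x := by
  have hray : Tendsto (fun t : ℝ => x + t • (x₁ - x)) (𝓝[>] 0) (𝓝 x) := by
    have h : Continuous fun t : ℝ => x + t • (x₁ - x) := by fun_prop
    simpa using h.continuousWithinAt.tendsto (x := 0) (s := Ioi 0)
  have hbound : Tendsto (fun t : ℝ => f x + t * (f x₁ - f x)) (𝓝[>] 0) (𝓝 (f x)) := by
    have h : Continuous fun t : ℝ => f x + t * (f x₁ - f x) := by fun_prop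
    simpa using h.continuousWithinAt.tendsto (x := 0) (s := Ioi 0)
  refine le_of_tendsto_of_tendsto ((hg.tendsto x).comp hray) hbound ?_
  filter_upwards [Ioc_mem_nhdsGT one_pos] with t ht
  exact (hle _ (hf.1.add_smul_sub_mem_interior hx hx₁ ht)).trans
    (hf.apply_add_smul_sub_le hx (interior_subset hx₁) (Ioc_subset_Icc_self ht))

lemma ConvexOn.forall_mem_shrunk_ball (hf : ConvexOn ℝ s f) {x₀ x₁ : E} {ρ M t : ℝ}
    (hx₀ : x₀ ∈ s) (hball : ball x₁ ρ ⊆ interior s) (hM : ∀ v ∈ ball x₁ ρ, f v ≤ M)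
    (ht : t ∈ Ioc (0 : ℝ) 1) :
    ∀ v ∈ ball (x₀ + t • (x₁ - x₀)) (t * ρ), v ∈ interior s ∧ f v ≤ f x₀ + t * (M - f x₀) := by
  intro v hv
  -- `v` is the image of `v₁ ∈ ball x₁ ρ` under the homothety of centre `x₀` and ratio `t`.
  set v₁ := x₀ + t⁻¹ • (v - x₀)
  have hv₁ : v₁ ∈ ball x₁ ρ := by
    have h : v₁ - x₁ = t⁻¹ • (v - (x₀ + t • (x₁ - x₀))) := by
      simp only [v₁, smul_sub, smul_add, smul_smul, inv_mul_cancel₀ ht.1.ne', one_smul]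
      abel
    rw [mem_ball, dist_eq_norm, h, norm_smul, Real.norm_eq_abs, abs_inv, abs_of_pos ht.1,
      inv_mul_lt_iff₀ ht.1, ← dist_eq_norm]
    exact mem_ball.1 hv
  have hv_eq : x₀ + t • (v₁ - x₀) = v := by
    simp [v₁, smul_smul, mul_inv_cancel₀ ht.1.ne']
  rw [← hv_eq]
  refine ⟨hf.1.add_smul_sub_mem_interior hx₀ (hball hv₁) ht, ?_⟩
  have h := hf.apply_add_smul_sub_le hx₀ (interior_subset (hball hv₁)) (Ioc_subset_Icc_self ht)
  nlinarith [hM v₁ hv₁, ht.1]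

end Normed

lemma exists_subseq_tendsto_of_not_tendsto_norm_atTop {F : Type*} [NormedAddCommGroup F]
    [ProperSpace F] {g : ℕ → F} (h : ¬Tendsto (fun i => ‖g i‖) atTop atTop) :
    ∃ a, ∃ φ : ℕ → ℕ, StrictMono φ ∧ Tendsto (g ∘ φ) atTop (𝓝 a) := by
  obtain ⟨b, hb⟩ : ∃ b, ∃ᶠ i in atTop, ‖g i‖ < b := by
    simpa only [Filter.tendsto_atTop, not_forall, not_eventually, not_le] using h
  obtain ⟨a, -, φ, hφ, hlim⟩ := tendsto_subseq_of_frequently_bounded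
    (isBounded_ball (x := (0 : F)) (r := b)) (hb.mono fun i hi => mem_ball_zero_iff.2 hi)
  exact ⟨a, φ, hφ, hlim⟩

section FiniteDimensional

variable {E : Type*} [NormedAddCommGroup E] [NormedSpace ℝ E] [FiniteDimensional ℝ E]
  {s : Set E} {f : E → ℝ}

lemma LocallyLipschitzOn.subset_closure_setOf_differentiableAt {F : Type*}
    [NormedAddCommGroup F] [NormedSpace ℝ F] [FiniteDimensional ℝ F] {g : E → F}
    (hs : IsOpen s) (hg : LocallyLipschitzOn s g) :
    s ⊆ closure {x | DifferentiableAt ℝ g x} := by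
  intro x hx
  rw [mem_closure_iff_nhds]
  intro V hV
  obtain ⟨K, t, ht, hK⟩ := hg hx
  rw [hs.nhdsWithin_eq hx] at ht
  let _ : MeasurableSpace E := borel E
  have _ : BorelSpace E := ⟨rfl⟩
  have hdense := MeasureTheory.Measure.dense_of_ae
    (hK.ae_differentiableWithinAt_of_mem (μ := (Module.finBasis ℝ E).addHaar))
  obtain ⟨z, hz, hzd⟩ := hdense.inter_open_nonempty (interior (V ∩ t)) isOpen_interior
    ⟨x, mem_interior_iff_mem_nhds.2 (inter_mem hV ht)⟩
  have hzt : t ∈ 𝓝 z :=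
    mem_of_superset (isOpen_interior.mem_nhds hz) (interior_subset.trans inter_subset_right)
  exact ⟨z, (interior_subset hz).1, (hzd (mem_of_mem_nhds hzt)).differentiableAt hzt⟩

lemma ConvexOn.interior_subset_closure_setOf_differentiableAt (hf : ConvexOn ℝ s f) :
    interior s ⊆ closure {x | DifferentiableAt ℝ f x} :=
  hf.locallyLipschitzOn_interior.subset_closure_setOf_differentiableAt isOpen_interior

lemma ConvexOn.isOpen_strictEpigraph_interior (hf : ConvexOn ℝ s f) :
    IsOpen {p : E × ℝ | p.1 ∈ interior s ∧ f p.1 < p.2} := by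
  have hcont : ContinuousOn (fun p : E × ℝ => p.2 - f p.1) (interior s ×ˢ univ) :=
    continuous_snd.continuousOn.sub
      (hf.continuousOn_interior.comp continuousOn_fst fun p hp => hp.1)
  convert hcont.isOpen_inter_preimage (isOpen_interior.prod isOpen_univ)
    (isOpen_Ioi (a := 0)) using 1
  ext p
  simp [sub_pos]

lemma ConvexOn.exists_le_on_interior_of_ray_lower_bound (hf : ConvexOn ℝ s f) {x₀ x₁ : E}
    {c : ℝ} (hx₁ : x₁ ∈ interior s)
    (hc : ∀ t ∈ Icc (0 : ℝ) 1, f x₀ + c * t ≤ f (x₀ + t • (x₁ - x₀))) :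
    ∃ ℓ : StrongDual ℝ E, ∀ w ∈ interior s, f x₀ + ℓ (w - x₀) ≤ f w := by
  -- The separating functional `φ` has negative vertical part `σ`, and `-φ / σ` restricted to
  -- `E × {0}` is the slope of an affine minorant of `f` through `(x₀, f x₀)`.
  have hdisj : Disjoint {p : E × ℝ | p.1 ∈ interior s ∧ f p.1 < p.2}
      (segment ℝ (x₀, f x₀) (x₁, f x₀ + c)) := by
    refine Set.disjoint_left.2 fun p hp hpS => ?_
    rw [segment_eq_image'] at hpS
    obtain ⟨t, ht, rfl⟩ := hpS
    have h := hc t ht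
    simp only [Prod.mk_sub_mk, Prod.smul_mk, Prod.mk_add_mk, smul_eq_mul, add_sub_cancel_left,
      Set.mem_ofPred_eq] at hp
    linarith [hp.2]
  obtain ⟨φ, a, hφO, hφS⟩ := geometric_hahn_banach_open
    (hf.subset interior_subset hf.1.interior).convex_strict_epigraph
    hf.isOpen_strictEpigraph_interior (convex_segment _ _) hdisj
  have hsplit : ∀ v r, φ (v, r) = φ (v, 0) + r * φ (0, 1) := fun v r => by
    rw [← smul_eq_mul, ← map_smul, ← map_add]
    simp
  set σ := φ (0, 1)
  have hx₀S := hφS _ (left_mem_segment ℝ _ _)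
  have hσ : σ < 0 := by
    have h₁ := hφO (x₁, max (f x₁) (f x₀ + c) + 1)
      ⟨hx₁, show f x₁ < _ by linarith [le_max_left (f x₁) (f x₀ + c)]⟩
    have h₂ := hφS _ (right_mem_segment ℝ _ _)
    rw [hsplit] at h₁ h₂
    nlinarith [le_max_right (f x₁) (f x₀ + c)]
  refine ⟨(-σ)⁻¹ • φ.comp (ContinuousLinearMap.inl ℝ E ℝ), fun w hw => ?_⟩
  refine le_of_forall_gt fun r hr => ?_
  have hwr := hφO (w, r) ⟨hw, hr⟩
  rw [hsplit] at hwr hx₀S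
  have hsub : φ (w - x₀, 0) = φ (w, 0) - φ (x₀, 0) := by
    rw [← map_sub, Prod.mk_sub_mk, sub_zero]
  have hlt : (-σ)⁻¹ * φ (w - x₀, 0) < r - f x₀ := by
    rw [inv_mul_lt_iff₀ (neg_pos.2 hσ), hsub]
    nlinarith
  simp only [smul_apply, ContinuousLinearMap.comp_apply,
    ContinuousLinearMap.inl_apply, smul_eq_mul]
  linarith

lemma ConvexOn.exists_subgradient_of_ray_lower_bound (hf : ConvexOn ℝ s f) {x₀ x₁ : E}
    {c : ℝ} (hx₁ : x₁ ∈ interior s)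
    (hc : ∀ t ∈ Icc (0 : ℝ) 1, f x₀ + c * t ≤ f (x₀ + t • (x₁ - x₀))) :
    ∃ ℓ : StrongDual ℝ E, ∀ x ∈ s, f x₀ + ℓ (x - x₀) ≤ f x := by
  obtain ⟨ℓ, hℓ⟩ := hf.exists_le_on_interior_of_ray_lower_bound hx₁ hc
  exact ⟨ℓ, fun x hx => hf.le_of_forall_mem_interior_le (by fun_prop) hx₁ hx hℓ⟩

lemma ConvexOn.exists_differentiableAt_near_ray (hf : ConvexOn ℝ s f) {x₀ x₁ : E}
    {ℓ : StrongDual ℝ E} {ρ M t : ℝ} (hx₀ : x₀ ∈ s)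
    (hℓ : ∀ x ∈ s, f x₀ + ℓ (x - x₀) ≤ f x) (hρ : 0 < ρ) (hball : ball x₁ ρ ⊆ interior s)
    (hM : ∀ v ∈ ball x₁ ρ, f v ≤ M) (ht : t ∈ Ioc (0 : ℝ) 1) :
    ∃ w ∈ interior s, dist w x₀ < t * (ρ + ‖x₁ - x₀‖) ∧ DifferentiableAt ℝ f w ∧
      ‖fderiv ℝ f w‖ ≤ 2 * (M - f x₀ + ‖ℓ‖ * (ρ + ‖x₁ - x₀‖)) / ρ := by
  set z := x₀ + t • (x₁ - x₀)
  have hshrunk := hf.forall_mem_shrunk_ball hx₀ hball hM ht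
  have htρ : 0 < t * ρ / 2 := by have := ht.1; positivity
  obtain ⟨w, hwz, hwd⟩ : (ball z (t * ρ / 2) ∩ {w | DifferentiableAt ℝ f w}).Nonempty :=
    mem_closure_iff_nhds.1 (hf.interior_subset_closure_setOf_differentiableAt
      (hshrunk z (mem_ball_self (by linarith))).1) _ (ball_mem_nhds z htρ)
  have hclosed : closedBall w (t * ρ / 2) ⊆ ball z (t * ρ) :=
    closedBall_subset_ball' (by linarith [mem_ball.1 hwz])
  have hdist : dist w x₀ < t * (ρ + ‖x₁ - x₀‖) := by
    have hz : dist z x₀ = t * ‖x₁ - x₀‖ := by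
      rw [dist_eq_norm, add_sub_cancel_left, norm_smul, Real.norm_eq_abs, abs_of_pos ht.1]
    linarith [dist_triangle w z x₀, mem_ball.1 hwz]
  have hgrad := hf.norm_fderiv_le htρ
    (fun v hv => interior_subset (hshrunk v (hclosed hv)).1) hwd
    (fun v hv => (hshrunk v (hclosed hv)).2)
  have hws : w ∈ interior s := (hshrunk w (hclosed (mem_closedBall_self htρ.le))).1
  have hfw : f x₀ - ‖ℓ‖ * (t * (ρ + ‖x₁ - x₀‖)) ≤ f w := by
    have hℓw : -(‖ℓ‖ * dist w x₀) ≤ ℓ (w - x₀) := by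
      rw [dist_eq_norm, neg_le]
      exact (neg_le_abs _).trans (ℓ.le_opNorm _)
    nlinarith [hℓ w (interior_subset hws), norm_nonneg ℓ]
  refine ⟨w, hws, hdist, hwd, hgrad.trans ?_⟩
  calc (f x₀ + t * (M - f x₀) - f w) / (t * ρ / 2)
      ≤ t * (M - f x₀ + ‖ℓ‖ * (ρ + ‖x₁ - x₀‖)) / (t * ρ / 2) := by gcongr; nlinarith
    _ = 2 * (M - f x₀ + ‖ℓ‖ * (ρ + ‖x₁ - x₀‖)) / ρ := by
      field_simp [ht.1.ne']

lemma ConvexOn.exists_mem_closure_differentiableAt_norm_fderiv_le (hf : ConvexOn ℝ s f)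
    {x₀ : E} {ℓ : StrongDual ℝ E} (hx₀ : x₀ ∈ s) (hs : (interior s).Nonempty)
    (hℓ : ∀ x ∈ s, f x₀ + ℓ (x - x₀) ≤ f x) :
    ∃ K, x₀ ∈ closure {w | w ∈ interior s ∧ DifferentiableAt ℝ f w ∧ ‖fderiv ℝ f w‖ ≤ K} := by
  obtain ⟨x₁, hx₁⟩ := hs
  obtain ⟨ρ, hρ, hρx₁⟩ : ∃ ρ > 0, ∀ v ∈ ball x₁ ρ, v ∈ interior s ∧ f v < f x₁ + 1 :=
    Metric.eventually_nhds_iff_ball.1 (Filter.Eventually.and (isOpen_interior.mem_nhds hx₁)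
      ((hf.continuousOn_interior.continuousAt (isOpen_interior.mem_nhds hx₁)).eventually
        (gt_mem_nhds (lt_add_one _))))
  refine ⟨2 * (f x₁ + 1 - f x₀ + ‖ℓ‖ * (ρ + ‖x₁ - x₀‖)) / ρ,
    Metric.mem_closure_iff.2 fun ε hε => ?_⟩
  have hsmall : ∀ᶠ t in 𝓝[>] (0 : ℝ), t ∈ Ioc (0 : ℝ) 1 ∧ t * (ρ + ‖x₁ - x₀‖) < ε := by
    have h : Tendsto (fun t : ℝ => t * (ρ + ‖x₁ - x₀‖)) (𝓝[>] 0) (𝓝 0) := by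
      simpa using (tendsto_id.mono_right (nhdsWithin_le_nhds (a := (0 : ℝ)) (s := Ioi 0))).mul_const
        (ρ + ‖x₁ - x₀‖)
    exact Filter.Eventually.and (Ioc_mem_nhdsGT one_pos) (h.eventually (gt_mem_nhds hε))
  obtain ⟨t, ht, htε⟩ := hsmall.exists
  obtain ⟨w, hws, hwdist, hwd, hwK⟩ := hf.exists_differentiableAt_near_ray hx₀ hℓ hρ
    (fun v hv => (hρx₁ v hv).1) (fun v hv => (hρx₁ v hv).2.le) ht
  exact ⟨w, ⟨hws, hwd, hwK⟩, by rw [dist_comm]; linarith⟩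

end FiniteDimensional

theorem stmt7_general {n : ℕ} (u : En n → EReal)
    (hlsc : LowerSemicontinuous u)
    (hconv : Convex ℝ {p : En n × ℝ | u p.1 ≤ (p.2 : EReal)})
    (hbot : ∀ x, u x ≠ ⊥)
    (U : Set (En n)) (hU : U = interior {x | u x ≠ ⊤}) (hUne : U.Nonempty)
    (x₀ : En n) (hfin : u x₀ ≠ ⊤) :
    List.TFAE [
      -- (i) finite one-sided directional derivative for some x₁ ∈ U
      (∃ x₁ ∈ U, ∃ m : ℝ, Tendsto
        (fun t : ℝ => ((u (x₀ + t • (x₁ - x₀))).toReal - (u x₀).toReal) / t)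
        (𝓝[>] 0) (𝓝 m)),
      -- (ii) finite one-sided directional derivative for every x₁ ∈ U
      (∀ x₁ ∈ U, ∃ m : ℝ, Tendsto
        (fun t : ℝ => ((u (x₀ + t • (x₁ - x₀))).toReal - (u x₀).toReal) / t)
        (𝓝[>] 0) (𝓝 m)),
      -- (iii) u admits a subgradient at x₀
      (∃ y : En n, ∀ x : En n, (((u x₀).toReal + ⟪x - x₀, y⟫ : ℝ) : EReal) ≤ u x),
      -- (iv) a sequence in U converging to x₀ at which u is differentiable with
      -- gradient norms not tending to +∞
      (∃ x : ℕ → En n, (∀ i, x i ∈ U) ∧ Tendsto x atTop (𝓝 x₀) ∧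
        (∀ i, DifferentiableAt ℝ (fun z => (u z).toReal) (x i)) ∧
        ¬ Tendsto (fun i => ‖fderiv ℝ (fun z => (u z).toReal) (x i)‖) atTop atTop)] := by
  have hf := convexOn_toReal_of_convex_epigraph hbot hconv
  subst hU
  rw [exists_inner_subgradient_iff hbot]
  tfae_have 1 → 3 := by
    rintro ⟨x₁, hx₁, hlim⟩
    obtain ⟨c, hc⟩ := (hf.exists_tendsto_slope_ray_iff hfin (interior_subset hx₁)).1 hlim
    exact hf.exists_subgradient_of_ray_lower_bound hx₁ hc
  tfae_have 3 → 2 := by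
    rintro ⟨ℓ, hℓ⟩ x₁ hx₁
    refine (hf.exists_tendsto_slope_ray_iff hfin (interior_subset hx₁)).2
      ⟨ℓ (x₁ - x₀), fun t ht => ?_⟩
    simpa [mul_comm] using hℓ _ (hf.1.add_smul_sub_mem hfin (interior_subset hx₁) ht)
  tfae_have 2 → 1 := fun h => hUne.elim fun x₁ hx₁ => ⟨x₁, hx₁, h x₁ hx₁⟩
  tfae_have 3 → 4 := by
    rintro ⟨ℓ, hℓ⟩
    obtain ⟨K, hK⟩ := hf.exists_mem_closure_differentiableAt_norm_fderiv_le hfin hUne hℓ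
    obtain ⟨x, hxK, hx⟩ := mem_closure_iff_seq_limit.1 hK
    refine ⟨x, fun i => (hxK i).1, hx, fun i => (hxK i).2.1, fun htop => ?_⟩
    obtain ⟨i, hi⟩ := (htop.eventually_gt_atTop K).exists
    exact hi.not_ge (hxK i).2.2
  tfae_have 4 → 3 := by
    rintro ⟨x, hxU, hx, hdiff, hunbdd⟩
    obtain ⟨ℓ, φ, hφ, hℓ⟩ := exists_subseq_tendsto_of_not_tendsto_norm_atTop hunbdd
    exact ⟨ℓ, fun y hy => hf.le_of_tendsto_fderiv
      (hlsc.lowerSemicontinuousWithinAt_toReal hbot hfin) (fun i => interior_subset (hxU (φ i)))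
      (hx.comp hφ.tendsto_atTop) (fun i => hdiff (φ i)) hℓ hy⟩
  tfae_finish

theorem stmt7 {n : ℕ} (u : En n → EReal)
    (hlsc : LowerSemicontinuous u)
    (hconv : Convex ℝ {p : En n × ℝ | u p.1 ≤ (p.2 : EReal)})
    (hbot : ∀ x, u x ≠ ⊥) (htop : ∃ x, u x ≠ ⊤)
    (U : Set (En n)) (hU : U = interior {x | u x ≠ ⊤}) (hUne : U.Nonempty)
    (x₀ : En n) (hx₀ : x₀ ∈ frontier U) (hfin : u x₀ ≠ ⊤) :
    List.TFAE [
      -- (i) finite one-sided directional derivative for some x₁ ∈ U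
      (∃ x₁ ∈ U, ∃ m : ℝ, Tendsto
        (fun t : ℝ => ((u (x₀ + t • (x₁ - x₀))).toReal - (u x₀).toReal) / t)
        (𝓝[>] 0) (𝓝 m)),
      -- (ii) finite one-sided directional derivative for every x₁ ∈ U
      (∀ x₁ ∈ U, ∃ m : ℝ, Tendsto
        (fun t : ℝ => ((u (x₀ + t • (x₁ - x₀))).toReal - (u x₀).toReal) / t)
        (𝓝[>] 0) (𝓝 m)),
      -- (iii) u admits a subgradient at x₀
      (∃ y : En n, ∀ x : En n, (((u x₀).toReal + ⟪x - x₀, y⟫ : ℝ) : EReal) ≤ u x),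
      -- (iv) a sequence in U converging to x₀ at which u is differentiable with
      -- gradient norms not tending to +∞
      (∃ x : ℕ → En n, (∀ i, x i ∈ U) ∧ Tendsto x atTop (𝓝 x₀) ∧
        (∀ i, DifferentiableAt ℝ (fun z => (u z).toReal) (x i)) ∧
        ¬ Tendsto (fun i => ‖fderiv ℝ (fun z => (u z).toReal) (x i)‖) atTop atTop)] :=
  stmt7_general u hlsc hconv hbot U hU hUne x₀ hfin
end
end
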